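/- arXiv:2108.10236 — 6 statements merged into one kernel-verified Lean document; each statement's English description precedes it below -/
import Mathlib

section
/- Given a (k,n) Grassmann necklace (I_1,...,I_n), the function f: ℤ → ℤ defined by: f(a) = a if a mod n ∉ I_{a mod n}; and f(a) = c where I_{a+1} = (I_a \ {a}) ∪ {b}, b ≡ c mod n, a < c ≤ a+n, if a mod n ∈ I_{a mod n}; extended by f(i+n) = f(i)+n, is a well-defined (k,n) bounded affine permutation. -/
/-- A `(k,n)` Grassmann necklace, modelled with `ZMod n`. -/
def IsGrassmannNecklace (n k : ℕ) (I : ZMod n → Finset (ZMod n)) : Prop :=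
  (∀ a, (I a).card = k) ∧ ∀ a, I a ⊆ insert a (I (a + 1))

/-- A `(k,n)` affine permutation. -/
def IsAffinePermutation (n k : ℕ) (f : ℤ → ℤ) : Prop :=
  Function.Bijective f ∧ (∀ i : ℤ, f (i + n) = f i + n) ∧
    (∑ i ∈ Finset.Icc (1 : ℤ) (n : ℤ), (f i - i)) = (k : ℤ) * n

/-- A `(k,n)` bounded affine permutation. -/
def IsBoundedAffinePermutation (n k : ℕ) (f : ℤ → ℤ) : Prop :=
  IsAffinePermutation n k f ∧ ∀ i : ℤ, i ≤ f i ∧ f i ≤ i + n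


namespace GNaux

/-- `val1` of `u : ZMod n` : the representative in `[1, n]`. -/
def val1 {n : ℕ} (u : ZMod n) : ℕ := if u = 0 then n else u.val

lemma val1_pos {n : ℕ} (hn : 0 < n) (u : ZMod n) : 1 ≤ val1 u := by
  haveI : NeZero n := ⟨hn.ne'⟩
  unfold val1
  split
  · exact hn
  · next h => exact Nat.pos_of_ne_zero (by simpa [ZMod.val_eq_zero] using h)

lemma val1_le {n : ℕ} (hn : 0 < n) (u : ZMod n) : val1 u ≤ n := by
  haveI : NeZero n := ⟨hn.ne'⟩
  unfold val1
  split
  · exact le_rfl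
  · exact (ZMod.val_lt u).le

lemma cast_val1 {n : ℕ} (hn : 0 < n) (u : ZMod n) : ((val1 u : ℕ) : ZMod n) = u := by
  haveI : NeZero n := ⟨hn.ne'⟩
  unfold val1
  split
  · next h => simp [h]
  · exact ZMod.natCast_rightInverse u

lemma val1_inj {n : ℕ} (hn : 0 < n) {u v : ZMod n} (h : val1 u = val1 v) : u = v := by
  rw [← cast_val1 hn u, ← cast_val1 hn v, h]

lemma val1_cast {n : ℕ} (hn : 0 < n) {j : ℕ} (h1 : 1 ≤ j) (h2 : j ≤ n) :
    val1 ((j : ZMod n)) = j := by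
  haveI : NeZero n := ⟨hn.ne'⟩
  rcases eq_or_lt_of_le h2 with h | h
  · subst h; simp [val1]
  · have hne : ((j : ZMod n)) ≠ 0 := by
      intro hj
      have := (ZMod.natCast_eq_natCast_iff j 0 n).mp (by simpa using hj)
      have := (Nat.modEq_iff_dvd' (Nat.zero_le j)).mp this.symm
      simp at this
      have := Nat.le_of_dvd h1 this
      omega
    simp only [val1, if_neg hne]
    exact ZMod.val_cast_of_lt h

lemma val1_eq_n {n : ℕ} (hn : 0 < n) {u : ZMod n} (h : val1 u = n) : u = 0 := by
  haveI : NeZero n := ⟨hn.ne'⟩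
  by_contra hu
  simp only [val1, if_neg hu] at h
  have := ZMod.val_lt u
  omega

lemma val1_zero {n : ℕ} : val1 (0 : ZMod n) = n := by simp [val1]

lemma zmod_cast_ne {n : ℕ} {u v : ℕ} (h1 : u < v) (h2 : v ≤ n) (h3 : 1 ≤ u ∨ v < n) :
    (u : ZMod n) ≠ (v : ZMod n) := by
  intro h
  have hmod : u ≡ v [MOD n] := (ZMod.natCast_eq_natCast_iff u v n).mp h
  have hdvd : n ∣ v - u := (Nat.modEq_iff_dvd' h1.le).mp hmod
  have hpos : 0 < v - u := Nat.sub_pos_of_lt h1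
  have := Nat.le_of_dvd hpos hdvd
  omega

end GNaux


namespace GNaux

section Fb

variable {n k : ℕ} (I : ZMod n → Finset (ZMod n))

open Classical in
/-- The new element entering the necklace at step `x`. -/
noncomputable def Fb (x : ZMod n) : ZMod n :=
  if h : ∃ b, I (x + 1) = insert b (I x \ {x}) ∧ b ∉ I x \ {x} then h.choose else x

variable {I}
variable (hc : ∀ a, (I a).card = k) (hs : ∀ a, I a ⊆ insert a (I (a + 1)))

include hs in
lemma sdiff_subset_succ (x : ZMod n) : I x \ {x} ⊆ I (x + 1) := by
  intro y hy
  rw [Finset.mem_sdiff, Finset.mem_singleton] at hy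
  have := hs x hy.1
  rw [Finset.mem_insert] at this
  tauto

include hc hs in
lemma exists_newElt {x : ZMod n} (hx : x ∈ I x) :
    ∃ b, I (x + 1) = insert b (I x \ {x}) ∧ b ∉ I x \ {x} := by
  have hsub := sdiff_subset_succ hs x
  have hcard : (I x \ {x}).card = k - 1 := by
    rw [Finset.sdiff_singleton_eq_erase, Finset.card_erase_of_mem hx, hc x]
  have hk : 1 ≤ k := by
    have := Finset.card_pos.mpr ⟨x, hx⟩
    rw [hc x] at this; exact this
  have hss : I x \ {x} ⊂ I (x + 1) := by
    refine hsub.ssubset_of_ne ?_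
    intro h
    have h4 := hc (x + 1)
    rw [← h, hcard] at h4
    omega
  obtain ⟨b, hb1, hb2⟩ := Finset.exists_of_ssubset hss
  refine ⟨b, ?_, hb2⟩
  apply (Finset.eq_of_subset_of_card_le _ _).symm
  · exact Finset.insert_subset hb1 hsub
  · rw [Finset.card_insert_of_notMem hb2, hcard, hc]; omega

include hc hs in
lemma Fb_spec {x : ZMod n} (hx : x ∈ I x) :
    I (x + 1) = insert (Fb I x) (I x \ {x}) ∧ Fb I x ∉ I x \ {x} := by
  have hex := exists_newElt hc hs hx
  rw [Fb, dif_pos hex]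
  exact hex.choose_spec

include hc hs in
lemma Fb_unique {x b : ZMod n} (hx : x ∈ I x)
    (hb : I (x + 1) = insert b (I x \ {x})) : b = Fb I x := by
  obtain ⟨h1, h2⟩ := Fb_spec hc hs hx
  have hbn : b ∉ I x \ {x} := by
    intro hmem
    have : I (x + 1) = I x \ {x} := by rw [hb, Finset.insert_eq_self.mpr hmem]
    have h3 : (I x \ {x}).card = k - 1 := by
      rw [Finset.sdiff_singleton_eq_erase, Finset.card_erase_of_mem hx, hc x]
    have hk : 1 ≤ k := by
      have := Finset.card_pos.mpr ⟨x, hx⟩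
      rw [hc x] at this; exact this
    have h4 := hc (x + 1)
    rw [this, h3] at h4
    omega
  have : b ∈ insert (Fb I x) (I x \ {x}) := by rw [← h1, hb]; exact Finset.mem_insert_self _ _
  rcases Finset.mem_insert.mp this with h | h
  · exact h
  · exact absurd h hbn

include hc hs in
lemma I_succ_of_not_mem {x : ZMod n} (hx : x ∉ I x) : I (x + 1) = I x := by
  have hsub : I x ⊆ I (x + 1) := by
    intro y hy
    have := hs x hy
    rw [Finset.mem_insert] at this
    rcases this with h | h
    · exact absurd (h ▸ hy) hx
    · exact h
  exact (Finset.eq_of_subset_of_card_le hsub (by rw [hc, hc])).symm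

include hc hs in
lemma Fb_eq_self {x : ZMod n} (hx : x ∉ I x) : Fb I x = x := by
  rw [Fb, dif_neg]
  rintro ⟨b, hb1, hb2⟩
  rw [I_succ_of_not_mem hc hs hx] at hb1
  have hd : I x \ {x} = I x := by
    rw [Finset.sdiff_singleton_eq_erase, Finset.erase_eq_of_notMem hx]
  rw [hd] at hb1 hb2
  have : b ∈ I x := by rw [hb1]; exact Finset.mem_insert_self _ _
  exact hb2 this

end Fb

end GNaux


namespace GNaux

section Walk

variable {n k : ℕ} {I : ZMod n → Finset (ZMod n)}
variable (hn : 0 < n) (hc : ∀ a, (I a).card = k) (hs : ∀ a, I a ⊆ insert a (I (a + 1)))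

include hc hs in
lemma persist (m : ℕ) {z b : ZMod n} (hb : b ∈ I z)
    (hne : ∀ t : ℕ, t < m → b ≠ z + (t : ZMod n)) : b ∈ I (z + (m : ZMod n)) := by
  induction m with
  | zero => simpa using hb
  | succ m ih =>
    have h1 : b ∈ I (z + (m : ZMod n)) := ih (fun t ht => hne t (by omega))
    have hbz : b ≠ z + (m : ZMod n) := hne m (by omega)
    have hstep : b ∈ I (z + (m : ZMod n) + 1) := by
      by_cases hx : (z + (m : ZMod n)) ∈ I (z + (m : ZMod n))
      · rw [(Fb_spec hc hs hx).1]
        exact Finset.mem_insert_of_mem (Finset.mem_sdiff.mpr ⟨h1, by simpa using hbz⟩)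
      · rwa [I_succ_of_not_mem hc hs hx]
    have heq : z + ((m + 1 : ℕ) : ZMod n) = z + (m : ZMod n) + 1 := by push_cast; ring
    rwa [heq]

include hn hc hs in
lemma mem_of_arc {x z : ZMod n} (hx : x ∈ I x)
    (hle : val1 (z - x) ≤ val1 (Fb I x - x)) : Fb I x ∈ I z := by
  set b := Fb I x with hbdef
  set d := val1 (b - x) with hd
  set j := val1 (z - x) with hj
  have hj1 : 1 ≤ j := val1_pos hn _
  have hjn : j ≤ n := val1_le hn _
  have hdn : d ≤ n := val1_le hn _
  have hb1 : b ∈ I (x + 1) := by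
    rw [(Fb_spec hc hs hx).1]; exact Finset.mem_insert_self _ _
  have hbx : b = x + ((d : ℕ) : ZMod n) := by rw [hd, cast_val1 hn]; ring
  have hcond : ∀ t : ℕ, t < j - 1 → b ≠ (x + 1) + (t : ZMod n) := by
    intro t ht heq
    have h2 : x + ((1 + t : ℕ) : ZMod n) = x + ((d : ℕ) : ZMod n) := by
      rw [← hbx, heq]; push_cast; ring
    have h3 : ((1 + t : ℕ) : ZMod n) = ((d : ℕ) : ZMod n) := add_left_cancel h2
    exact zmod_cast_ne (by omega) hdn (Or.inl (by omega)) h3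
  have key := persist hc hs (j - 1) hb1 hcond
  have hz : x + 1 + ((j - 1 : ℕ) : ZMod n) = z := by
    have h4 : ((j : ℕ) : ZMod n) = z - x := by rw [hj, cast_val1 hn]
    have h5 : ((j - 1 : ℕ) : ZMod n) = ((j : ℕ) : ZMod n) - 1 := by
      rw [Nat.cast_sub hj1]; norm_num
    rw [h5, h4]; ring
  rwa [hz] at key

include hn hc hs in
lemma Fb_inj : Function.Injective (Fb I) := by
  intro x y h
  by_contra hxy
  have main : ∀ u v : ZMod n, u ≠ v → u ∈ I u → v ∈ I v → Fb I u = Fb I v →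
      val1 (v - u) ≤ val1 (Fb I u - u) → False := by
    intro u v huv hu hv he hle
    have hbv : Fb I u ∈ I v := mem_of_arc hn hc hs hu hle
    have hb_eq_v : Fb I u = v := by
      have h2 := (Fb_spec hc hs hv).2
      rw [← he] at h2
      by_contra hne
      exact h2 (Finset.mem_sdiff.mpr ⟨hbv, by simpa using hne⟩)
    have hFv : Fb I v = v := by rw [← he, hb_eq_v]
    have hcover : val1 (u - v) ≤ val1 (Fb I v - v) := by
      rw [hFv, sub_self, val1_zero]; exact val1_le hn _
    have hbu : Fb I v ∈ I u := mem_of_arc hn hc hs hv hcover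
    have h2 := (Fb_spec hc hs hu).2
    rw [he] at h2
    have hb_eq_u : Fb I v = u := by
      by_contra hne
      exact h2 (Finset.mem_sdiff.mpr ⟨hbu, by simpa using hne⟩)
    exact huv (by rw [← hb_eq_u, hFv])
  by_cases hx : x ∈ I x <;> by_cases hy : y ∈ I y
  · rcases le_or_gt (val1 (y - x)) (val1 (Fb I x - x)) with hle | hlt
    · exact main x y hxy hx hy h hle
    · apply main y x (Ne.symm hxy) hy hx h.symm
      set d := val1 (Fb I x - x) with hd
      set j := val1 (y - x) with hj
      have hd1 : 1 ≤ d := val1_pos hn _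
      have hj_lt : j < n := by
        have hne : y - x ≠ 0 := sub_ne_zero_of_ne (Ne.symm hxy)
        rcases lt_or_eq_of_le (val1_le hn (y - x)) with h' | h'
        · exact h'
        · exact absurd (val1_eq_n hn h') hne
      have hj1 : 1 ≤ j := val1_pos hn _
      have hyx : y = x + ((j : ℕ) : ZMod n) := by rw [hj, cast_val1 hn]; ring
      have hbx : Fb I x = x + ((d : ℕ) : ZMod n) := by rw [hd, cast_val1 hn]; ring
      have hxy' : x - y = ((n - j : ℕ) : ZMod n) := by
        rw [hyx, Nat.cast_sub hj_lt.le, ZMod.natCast_self]; ring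
      have hby : Fb I y - y = ((n - j + d : ℕ) : ZMod n) := by
        rw [← h, hbx, hyx, Nat.cast_add, Nat.cast_sub hj_lt.le, ZMod.natCast_self]; ring
      rw [hxy', hby, val1_cast hn (by omega) (by omega), val1_cast hn (by omega) (by omega)]
      omega
  · have hFy : Fb I y = y := Fb_eq_self hc hs hy
    have hm : Fb I x ∈ I y := mem_of_arc hn hc hs hx (by rw [h, hFy])
    rw [h, hFy] at hm
    exact hy hm
  · have hFx : Fb I x = x := Fb_eq_self hc hs hx
    have hm : Fb I y ∈ I x := mem_of_arc hn hc hs hy (by rw [← h, hFx])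
    rw [← h, hFx] at hm
    exact hx hm
  · rw [Fb_eq_self hc hs hx, Fb_eq_self hc hs hy] at h
    exact hxy h

end Walk

end GNaux

namespace GNaux

section Count

variable {n k : ℕ} [NeZero n] {I : ZMod n → Finset (ZMod n)}
variable (hn : 0 < n) (hc : ∀ a, (I a).card = k) (hs : ∀ a, I a ⊆ insert a (I (a + 1)))

include hn hc hs in
lemma card_filter_eq (z : ZMod n) :
    (Finset.univ.filter fun x => x ∈ I x ∧ val1 (z - x) ≤ val1 (Fb I x - x)).card = k := by
  rw [← hc z]
  apply Finset.card_bij (fun x _ => Fb I x)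
  · intro x hx'
    simp only [Finset.mem_filter, Finset.mem_univ, true_and] at hx'
    exact mem_of_arc hn hc hs hx'.1 hx'.2
  · intro x1 h1 x2 h2 he
    exact Fb_inj hn hc hs he
  · intro b hb
    have hsurj : Function.Surjective (Fb I) :=
      Finite.surjective_of_injective (Fb_inj hn hc hs)
    obtain ⟨x, hxb⟩ := hsurj b
    refine ⟨x, ?_, hxb⟩
    simp only [Finset.mem_filter, Finset.mem_univ, true_and]
    have hx : x ∈ I x := by
      by_contra hx
      have hbx : b = x := by rw [← hxb, Fb_eq_self hc hs hx]
      by_cases hzx : z = x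
      · rw [hzx] at hb
        rw [hbx] at hb
        exact hx hb
      · set m := (x - z).val with hm
        have hmn : m < n := ZMod.val_lt _
        have hm1 : 1 ≤ m := by
          have hne : x - z ≠ 0 := sub_ne_zero_of_ne (Ne.symm hzx)
          have h0 : (x - z).val ≠ 0 := by simpa [ZMod.val_eq_zero] using hne
          omega
        have hxm : z + ((m : ℕ) : ZMod n) = x := by
          rw [hm, ZMod.natCast_rightInverse (x - z)]; ring
        have hcond : ∀ t : ℕ, t < m → b ≠ z + (t : ZMod n) := by
          intro t ht heq
          have h7 : ((t : ℕ) : ZMod n) = ((m : ℕ) : ZMod n) := by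
            have h8 : z + ((m : ℕ) : ZMod n) = z + (t : ZMod n) := by
              rw [hxm, ← hbx, heq]
            exact (add_left_cancel h8).symm
          exact zmod_cast_ne ht hmn.le (Or.inr hmn) h7
        have hmem := persist hc hs m hb hcond
        rw [hxm, ← hbx] at hmem
        rw [hbx] at hmem
        exact hx hmem
    refine ⟨hx, ?_⟩
    rw [hxb]
    by_contra hlt
    push_neg at hlt
    set d := val1 (b - x) with hd
    set j := val1 (z - x) with hj
    have hjn : j ≤ n := val1_le hn _
    have hd1 : 1 ≤ d := val1_pos hn _
    have hbIx : b ∈ I x := by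
      by_cases hjeq : j = n
      · have h8 : z - x = 0 := val1_eq_n hn (by rw [← hj]; exact hjeq)
        have h9 : z = x := by
          have := sub_eq_zero.mp h8; exact this
        rwa [← h9]
      · have hzx : z = x + ((j : ℕ) : ZMod n) := by rw [hj, cast_val1 hn]; ring
        have hbx2 : b = x + ((d : ℕ) : ZMod n) := by rw [hd, cast_val1 hn]; ring
        have hxm : z + ((n - j : ℕ) : ZMod n) = x := by
          rw [hzx, Nat.cast_sub hjn, ZMod.natCast_self]; ring
        have hcond : ∀ t : ℕ, t < n - j → b ≠ z + (t : ZMod n) := by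
          intro t ht heq
          have h6 : b = z + ((n - j + d : ℕ) : ZMod n) := by
            rw [hbx2, hzx, Nat.cast_add, Nat.cast_sub hjn, ZMod.natCast_self]; ring
          have h7 : ((t : ℕ) : ZMod n) = ((n - j + d : ℕ) : ZMod n) :=
            add_left_cancel (heq.symm.trans h6)
          exact zmod_cast_ne (by omega) (by omega) (Or.inr (by omega)) h7
        have hmem := persist hc hs (n - j) hb hcond
        rwa [hxm] at hmem
    have hbeqx : b = x := by
      have h2 := (Fb_spec hc hs hx).2
      rw [hxb] at h2
      by_contra hne
      exact h2 (Finset.mem_sdiff.mpr ⟨hbIx, by simpa using hne⟩)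
    have hdn' : d = n := by rw [hd, hbeqx, sub_self, val1_zero]
    omega

include hn hc hs in
lemma card_arc {x : ZMod n} (hx : x ∈ I x) :
    (Finset.univ.filter fun z : ZMod n => val1 (z - x) ≤ val1 (Fb I x - x)).card
      = val1 (Fb I x - x) := by
  set d := val1 (Fb I x - x) with hd
  have hdn : d ≤ n := val1_le hn _
  have hIcc : (Finset.Icc 1 d).card = d := by rw [Nat.card_Icc]; omega
  suffices h : (Finset.univ.filter fun z : ZMod n => val1 (z - x) ≤ d).card
      = (Finset.Icc 1 d).card by rw [h, hIcc]
  apply Finset.card_bij (fun z _ => val1 (z - x))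
  · intro z hz
    simp only [Finset.mem_filter, Finset.mem_univ, true_and] at hz
    exact Finset.mem_Icc.mpr ⟨val1_pos hn _, hz⟩
  · intro z1 h1 z2 h2 he
    have h3 := val1_inj hn he
    exact sub_left_inj.mp h3
  · intro j hj
    rw [Finset.mem_Icc] at hj
    refine ⟨x + ((j : ℕ) : ZMod n), ?_, ?_⟩
    · simp only [Finset.mem_filter, Finset.mem_univ, true_and]
      rw [add_sub_cancel_left, val1_cast hn hj.1 (le_trans hj.2 hdn)]
      exact hj.2
    · rw [add_sub_cancel_left, val1_cast hn hj.1 (le_trans hj.2 hdn)]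

/-- The displacement function. -/
noncomputable def step (I : ZMod n → Finset (ZMod n)) (x : ZMod n) : ℕ :=
  if x ∈ I x then val1 (Fb I x - x) else 0

include hn hc hs in
lemma sum_step : ∑ x : ZMod n, step I x = n * k := by
  have h1 : ∀ x : ZMod n, step I x
      = (Finset.univ.filter fun z : ZMod n =>
          x ∈ I x ∧ val1 (z - x) ≤ val1 (Fb I x - x)).card := by
    intro x
    by_cases hx : x ∈ I x
    · rw [step, if_pos hx]
      conv_lhs => rw [← card_arc hn hc hs hx]
      congr 1
      apply Finset.filter_congr
      intro z _
      simp [hx]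
    · simp [step, hx]
  calc ∑ x : ZMod n, step I x
      = ∑ x : ZMod n, ∑ z : ZMod n,
          (if x ∈ I x ∧ val1 (z - x) ≤ val1 (Fb I x - x) then 1 else 0) := by
        simp_rw [h1, Finset.card_filter]
    _ = ∑ z : ZMod n, ∑ x : ZMod n,
          (if x ∈ I x ∧ val1 (z - x) ≤ val1 (Fb I x - x) then 1 else 0) := Finset.sum_comm
    _ = ∑ _z : ZMod n, k := by
        refine Finset.sum_congr rfl fun z _ => ?_
        rw [← Finset.card_filter]
        exact card_filter_eq hn hc hs z
    _ = n * k := by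
        rw [Finset.sum_const, Finset.card_univ, ZMod.card, smul_eq_mul]

end Count

end GNaux

/-- Given a `(k,n)` Grassmann necklace `(I_a)`, there is a unique function `f : ℤ → ℤ`
such that: `f (i+n) = f i + n`; `f a = a` whenever `a mod n ∉ I_{a mod n}`; and whenever
`a mod n ∈ I_{a mod n}` and `I_{a+1} = (I_a \ {a}) ∪ {b}`, `f a` is the unique `c` with
`c ≡ b mod n` and `a < c ≤ a + n`.  Moreover this `f` is a `(k,n)` bounded affine
permutation. -/
theorem grassmannNecklace_to_boundedAffinePermutation (n k : ℕ) (hn : 0 < n)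
    (I : ZMod n → Finset (ZMod n)) (hI : IsGrassmannNecklace n k I) :
    ∃! f : ℤ → ℤ,
      (∀ i : ℤ, f (i + n) = f i + n) ∧
      (∀ a : ℤ,
        ((a : ZMod n) ∉ I (a : ZMod n) → f a = a) ∧
        (∀ b : ZMod n, (a : ZMod n) ∈ I (a : ZMod n) →
          I ((a : ZMod n) + 1) = insert b (I (a : ZMod n) \ {(a : ZMod n)}) →
          ((f a : ZMod n) = b ∧ a < f a ∧ f a ≤ a + n))) ∧
      IsBoundedAffinePermutation n k f := by
  classical
  obtain ⟨hc, hs⟩ := hI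
  haveI : NeZero n := ⟨hn.ne'⟩
  set f : ℤ → ℤ := fun a => a + (GNaux.step I ((a : ZMod n)) : ℤ) with hf
  have hstep_le : ∀ x : ZMod n, GNaux.step I x ≤ n := by
    intro x
    unfold GNaux.step
    split
    · exact GNaux.val1_le hn _
    · omega
  have hcast_step : ∀ x : ZMod n, x ∈ I x →
      ((GNaux.step I x : ℕ) : ZMod n) = GNaux.Fb I x - x := by
    intro x hx
    rw [GNaux.step, if_pos hx]
    exact GNaux.cast_val1 hn _
  have hFa : ∀ a : ℤ, ((f a : ℤ) : ZMod n) = GNaux.Fb I ((a : ZMod n)) := by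
    intro a
    by_cases hx : (a : ZMod n) ∈ I ((a : ZMod n))
    · have h1 := hcast_step _ hx
      simp only [hf]
      push_cast [h1]
      ring
    · simp only [hf, GNaux.step, if_neg hx]
      rw [GNaux.Fb_eq_self hc hs hx]
      push_cast
      ring
  have hper : ∀ i : ℤ, f (i + n) = f i + n := by
    intro i
    have hres : (((i + n : ℤ)) : ZMod n) = ((i : ℤ) : ZMod n) := by push_cast; simp
    simp only [hf, hres]
    ring
  have hbdd : ∀ i : ℤ, i ≤ f i ∧ f i ≤ i + n := by
    intro i
    constructor
    · simp only [hf]; omega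
    · simp only [hf]
      have := hstep_le ((i : ZMod n))
      omega
  have hspec : ∀ a : ℤ,
      ((a : ZMod n) ∉ I (a : ZMod n) → f a = a) ∧
      (∀ b : ZMod n, (a : ZMod n) ∈ I (a : ZMod n) →
        I ((a : ZMod n) + 1) = insert b (I (a : ZMod n) \ {(a : ZMod n)}) →
        ((f a : ZMod n) = b ∧ a < f a ∧ f a ≤ a + n)) := by
    intro a
    constructor
    · intro hmem
      simp [hf, GNaux.step, hmem]
    · intro b hmem hins
      have hb' : b = GNaux.Fb I ((a : ZMod n)) := GNaux.Fb_unique hc hs hmem hins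
      refine ⟨by rw [hFa, hb'], ?_, (hbdd a).2⟩
      have h1 : 1 ≤ GNaux.step I ((a : ZMod n)) := by
        rw [GNaux.step, if_pos hmem]
        exact GNaux.val1_pos hn _
      simp only [hf]
      omega
  have hinj : Function.Injective f := by
    intro a a' h
    have hFb : GNaux.Fb I ((a : ZMod n)) = GNaux.Fb I ((a' : ZMod n)) := by
      rw [← hFa a, ← hFa a', h]
    have hres : ((a : ZMod n)) = ((a' : ZMod n)) := GNaux.Fb_inj hn hc hs hFb
    simp only [hf] at h
    rw [hres] at h
    exact add_right_cancel h
  have hsurj : Function.Surjective f := by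
    intro m
    obtain ⟨x, hx⟩ := Finite.surjective_of_injective (GNaux.Fb_inj hn hc hs) ((m : ZMod n))
    refine ⟨m - (GNaux.step I x : ℤ), ?_⟩
    have hres : (((m - (GNaux.step I x : ℤ) : ℤ)) : ZMod n) = x := by
      by_cases hmx : x ∈ I x
      · have h1 := hcast_step x hmx
        push_cast [h1]
        rw [hx]
        ring
      · rw [GNaux.Fb_eq_self hc hs hmx] at hx
        simp only [GNaux.step, if_neg hmx]
        push_cast
        rw [hx]
        ring
    simp only [hf, hres]
    ring
  have hsum : (∑ i ∈ Finset.Icc (1 : ℤ) (n : ℤ), (f i - i)) = (k : ℤ) * n := by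
    have h1 : ∀ i : ℤ, f i - i = (GNaux.step I ((i : ZMod n)) : ℤ) := by
      intro i; simp only [hf]; ring
    calc (∑ i ∈ Finset.Icc (1 : ℤ) (n : ℤ), (f i - i))
        = ∑ i ∈ Finset.Icc (1 : ℤ) (n : ℤ), (GNaux.step I ((i : ZMod n)) : ℤ) := by
          exact Finset.sum_congr rfl fun i _ => h1 i
      _ = ∑ x : ZMod n, (GNaux.step I x : ℤ) := by
          apply Finset.sum_nbij' (fun a : ℤ => ((a : ZMod n)))
            (fun x : ZMod n => (GNaux.val1 x : ℤ))
          · intro a _; exact Finset.mem_univ _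
          · intro x _
            rw [Finset.mem_Icc]
            constructor
            · exact_mod_cast GNaux.val1_pos hn x
            · exact_mod_cast GNaux.val1_le hn x
          · intro a ha
            rw [Finset.mem_Icc] at ha
            have ha' : a = ((a.toNat : ℕ) : ℤ) := by omega
            rw [ha']
            push_cast
            rw [GNaux.val1_cast hn (by omega) (by omega)]
          · intro x _
            push_cast
            rw [GNaux.cast_val1 hn]
          · intro a _; rfl
      _ = ((∑ x : ZMod n, GNaux.step I x : ℕ) : ℤ) := by push_cast; rfl
      _ = (k : ℤ) * n := by rw [GNaux.sum_step hn hc hs]; push_cast; ring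
  refine ⟨f, ⟨hper, hspec, ⟨⟨hinj, hsurj⟩, hper, hsum⟩, hbdd⟩, ?_⟩
  intro g hg
  obtain ⟨hgper, hgpt, _⟩ := hg
  funext a
  by_cases hmem : (a : ZMod n) ∈ I ((a : ZMod n))
  · have hins := (GNaux.Fb_spec hc hs hmem).1
    obtain ⟨hgc, hga1, hga2⟩ := (hgpt a).2 (GNaux.Fb I ((a : ZMod n))) hmem hins
    obtain ⟨hfc, hfa1, hfa2⟩ := (hspec a).2 (GNaux.Fb I ((a : ZMod n))) hmem hins
    have hcongr : ((g a - f a : ℤ) : ZMod n) = 0 := by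
      push_cast
      rw [hgc, hfc]
      ring
    have hdvd : (n : ℤ) ∣ (g a - f a) := (ZMod.intCast_zmod_eq_zero_iff_dvd _ n).mp hcongr
    have hz : g a - f a = 0 := Int.eq_zero_of_abs_lt_dvd hdvd (by rw [abs_lt]; omega)
    omega
  · rw [(hgpt a).1 hmem, (hspec a).1 hmem]
end

section
/- The map sending a bounded affine permutation f to the collection I_a = {f(b) mod n : b < a and f(b) ≥ a} for a ∈ [n] is a bijection from the set of (k,n) bounded affine permutations to the set of (k,n) Grassmann necklaces. -/
/-- The Grassmann necklace associated to a bounded affine permutation: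
`I_a = {f b mod n : b < a and f b ≥ a}` (for a representative `a` of the residue
class; by boundedness only `b ∈ [a-n, a)` can contribute). -/
noncomputable def necklaceOfPerm (n : ℕ) (f : ℤ → ℤ) : ZMod n → Finset (ZMod n) := fun a =>
  (((Finset.Ico ((a.val : ℤ) - n) (a.val : ℤ)).filter
    (fun b => (a.val : ℤ) ≤ f b)).image (fun b => ((f b : ℤ) : ZMod n)))

/-!
The necklace `I` of a bounded affine permutation `f` obeys an exchange rule: `a ∈ I a` exactly
when `f a ≠ a`, and then `I (a + 1) = (I a \ {a}) ∪ {f a mod n}` with `f a mod n ∉ I a \ {a}`,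
while `I (a + 1) = I a` otherwise. The axioms of a Grassmann necklace say precisely that it obeys
such a rule for some choice of the entering elements. So `f` is read off its necklace (`f a` is the
representative in `(a, a + n]` of the element entering at step `a`), and conversely the map read
off a Grassmann necklace this way is a bounded affine permutation with that necklace, since two
sequences obeying the same rule with the same active indices coincide: around one period, each
element is either re-decided at its own index or never present. Finally `k` is recovered as
`∑ (f i - i) / n` by double counting the pairs `b < a ≤ f b`.
-/

open Finset

variable {n : ℕ}

theorem Int.eq_of_intCast_zmod_eq {x y : ℤ} (h : (x : ZMod n) = y) (hxy : x < y + n)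
    (hyx : y < x + n) : x = y := by
  have hdvd : (n : ℤ) ∣ y - x := (ZMod.intCast_eq_intCast_iff_dvd_sub x y n).1 h
  have := Int.eq_zero_of_abs_lt_dvd hdvd (abs_sub_lt_iff.2 ⟨by omega, by omega⟩)
  omega

theorem ZMod.val_intCast_add_ediv_mul [NeZero n] (A : ℤ) :
    ((A : ZMod n).val : ℤ) + A / n * n = A := by
  rw [ZMod.val_intCast, Int.emod_add_ediv_mul]

theorem Function.Periodic.sum_Ico_add {M : Type*} [AddCancelCommMonoid M] {φ : ℤ → M}
    (h : Function.Periodic φ n) (a c : ℤ) :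
    ∑ i ∈ Ico a (a + n), φ (i + c) = ∑ i ∈ Ico a (a + n), φ i := by
  let S (b : ℤ) : M := ∑ k ∈ range n, φ (b + k)
  have hS (b : ℤ) : ∑ i ∈ Ico b (b + n), φ i = S b := by simp [S, Int.Ico_eq_finset_map]
  have hsucc (b : ℤ) : S (b + 1) = S b := by
    have h1 := sum_range_succ (fun k : ℕ => φ (b + k)) n
    rw [sum_range_succ', Nat.cast_zero, add_zero, h b] at h1
    simp only [S, ← add_right_cancel h1]
    refine sum_congr rfl fun k _ => ?_
    push_cast
    ring_nf
  have hshift (m : ℤ) : S (a + m) = S a := by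
    induction m using Int.induction_on with
    | zero => simp
    | succ m ih => rw [← add_assoc, hsucc, ih]
    | pred m ih => rw [← ih, ← hsucc]; ring_nf
  rw [sum_Ico_add', add_right_comm, hS, hS, hshift]

theorem periodic_apply_sub_self {f : ℤ → ℤ} (hmap : ∀ i, f (i + n) = f i + n) :
    Function.Periodic (fun i => f i - i) n := fun i => by simp only [hmap]; ring

theorem apply_add_mul_eq {f : ℤ → ℤ} (hmap : ∀ i, f (i + n) = f i + n) (i m : ℤ) :
    f (i + m * n) = f i + m * n := by
  have := (periodic_apply_sub_self hmap).int_mul m i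
  simp only [Int.cast_id] at this
  linarith

theorem sum_card_filter_le_apply {f : ℤ → ℤ} (hmap : ∀ i, f (i + n) = f i + n)
    (hle : ∀ i, i ≤ f i) (hge : ∀ i, f i ≤ i + n) :
    ∑ A ∈ Icc 1 (n : ℤ), (#{b ∈ Ico (A - n) A | A ≤ f b} : ℤ) =
      ∑ i ∈ Icc 1 (n : ℤ), (f i - i) := by
  have hcard (A : ℤ) :
      #{b ∈ Ico (A - n) A | A ≤ f b} =
        #{j ∈ Icc 1 (n : ℤ) | j ≤ f (A - j) - (A - j)} := by
    refine card_nbij' (fun b => A - b) (fun j => A - j) ?_ ?_ ?_ ?_ <;>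
      intro x hx <;> simp only [coe_filter, Set.mem_ofPred_eq, mem_Ico, mem_Icc] at hx ⊢ <;>
      first | omega | exact ⟨⟨by omega, by omega⟩, by simpa using hx.2⟩
  have hcount (i : ℤ) :
      ∑ j ∈ Icc 1 (n : ℤ), (if j ≤ f i - i then 1 else 0 : ℤ) = f i - i := by
    have hfilter : {j ∈ Icc 1 (n : ℤ) | j ≤ f i - i} = Icc 1 (f i - i) := by
      ext j; simp only [mem_filter, mem_Icc]; have := hge i; omega
    rw [← natCast_card_filter, hfilter, Int.card_Icc_of_le _ _ (by have := hle i; omega)]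
    ring
  have hshift (j : ℤ) :
      ∑ A ∈ Icc 1 (n : ℤ), (if j ≤ f (A - j) - (A - j) then 1 else 0 : ℤ) =
        ∑ A ∈ Icc 1 (n : ℤ), (if j ≤ f A - A then 1 else 0 : ℤ) := by
    simp only [← Ico_add_one_right_eq_Icc, add_comm _ (1 : ℤ), sub_eq_add_neg (_ : ℤ) j]
    exact ((periodic_apply_sub_self hmap).comp
      fun d => if j ≤ d then (1 : ℤ) else 0).sum_Ico_add 1 (-j)
  calc ∑ A ∈ Icc 1 (n : ℤ), (#{b ∈ Ico (A - n) A | A ≤ f b} : ℤ)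
      = ∑ A ∈ Icc 1 (n : ℤ), ∑ j ∈ Icc 1 (n : ℤ),
          (if j ≤ f (A - j) - (A - j) then 1 else 0 : ℤ) := by
        simp only [hcard, natCast_card_filter]
    _ = ∑ j ∈ Icc 1 (n : ℤ), ∑ A ∈ Icc 1 (n : ℤ),
          (if j ≤ f A - A then 1 else 0 : ℤ) := by
        rw [sum_comm]; exact sum_congr rfl fun j _ => hshift j
    _ = ∑ i ∈ Icc 1 (n : ℤ), (f i - i) := by
        rw [sum_comm]; exact sum_congr rfl fun i _ => hcount i

theorem mem_of_forall_intCast_ne {X : ZMod n → Finset (ZMod n)}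
    (hX : ∀ a, X a ⊆ insert a (X (a + 1))) {x : ZMod n} {A B : ℤ} (hAB : A ≤ B)
    (hx : x ∈ X A) (hne : ∀ j ∈ Ico A B, (j : ZMod n) ≠ x) : x ∈ X B := by
  induction B, hAB using Int.leInduction with
  | base => exact hx
  | succ B hAB ih =>
    have hB := ih fun j hj => hne j (by simp only [mem_Ico] at hj ⊢; omega)
    rcases mem_insert.1 (hX _ hB) with h | h
    · exact absurd h.symm (hne B (by simp [hAB]))
    · exact_mod_cast h

/-- The step rule shared by Grassmann necklaces and the necklaces of bounded affine permutations:
`g a` plays the role of `f a mod n`, the element entering at step `a`. -/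
structure IsExchange (g : ZMod n → ZMod n) (X : ZMod n → Finset (ZMod n)) : Prop where
  succ_eq : ∀ a, X (a + 1) = if a ∈ X a then insert (g a) ((X a).erase a) else X a
  notMem_erase : ∀ a ∈ X a, g a ∉ (X a).erase a

namespace IsExchange

variable {g g' : ZMod n → ZMod n} {X Y : ZMod n → Finset (ZMod n)}

theorem subset_insert (h : IsExchange g X) (a : ZMod n) : X a ⊆ insert a (X (a + 1)) := by
  intro x hx
  rw [h.succ_eq]
  split_ifs
  · by_cases hxa : x = a <;> simp [hxa, hx]
  · exact mem_insert_of_mem hx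

theorem card_succ (h : IsExchange g X) (a : ZMod n) : (X (a + 1)).card = (X a).card := by
  rw [h.succ_eq]
  split_ifs with ha
  · rw [card_insert_of_notMem (h.notMem_erase a ha), card_erase_add_one ha]
  · rfl

theorem card_eq [NeZero n] (h : IsExchange g X) (a b : ZMod n) : (X a).card = (X b).card := by
  have hcard (m : ℕ) : (X (b + m)).card = (X b).card := by
    induction m with
    | zero => simp
    | succ m ih => rw [Nat.cast_succ, ← add_assoc, h.card_succ, ih]
  simpa using hcard (a - b).val

theorem mem_self [NeZero n] (h : IsExchange g X) {a x : ZMod n} (hx : x ∈ X a) : x ∈ X x := by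
  have hval : (((a.val + (x - a).val : ℕ) : ℤ) : ZMod n) = x := by simp
  have hlt := ZMod.val_lt (x - a)
  rw [← hval]
  refine mem_of_forall_intCast_ne h.subset_insert (A := a.val) (by omega) (by simpa) ?_
  intro j hj hjx
  rw [mem_Ico] at hj
  have := Int.eq_of_intCast_zmod_eq hjx (by omega) (by omega)
  omega

theorem apply_eq_of_mem (h : IsExchange g X) (h' : IsExchange g' X) {a : ZMod n} (ha : a ∈ X a) :
    g a = g' a := by
  have hins := (h.succ_eq a).symm.trans (h'.succ_eq a)
  rw [if_pos ha, if_pos ha] at hins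
  have hg : g a ∈ insert (g' a) ((X a).erase a) := hins ▸ mem_insert_self _ _
  exact (mem_insert.1 hg).resolve_right (h.notMem_erase a ha)

theorem eq [NeZero n] (hX : IsExchange g X) (hY : IsExchange g' Y)
    (hact : ∀ a, a ∈ X a ↔ a ∈ Y a) (hg : ∀ a ∈ X a, g a = g' a) : X = Y := by
  funext a
  obtain ⟨A, rfl⟩ := ZMod.intCast_surjective a
  -- Membership of `y` can only differ while `y` still has an active index ahead in the period.
  have key (m : ℕ) (hm : m ≤ n) (y : ZMod n)
      (hy : ∀ j ∈ Ico (A + m) (A + n), (j : ZMod n) = y → y ∉ X y) :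
      y ∈ X ((A + m : ℤ) : ZMod n) ↔ y ∈ Y ((A + m : ℤ) : ZMod n) := by
    induction m generalizing y with
    | zero =>
      have hyX : y ∉ X y := hy (A + ((y - A : ZMod n).val : ℕ))
        (by rw [mem_Ico]; have := ZMod.val_lt (y - A : ZMod n); omega) (by simp)
      simp only [CharP.cast_eq_zero, add_zero]
      exact iff_of_false (fun h => hyX (hX.mem_self h))
        (fun h => hyX ((hact y).2 (hY.mem_self h)))
    | succ m ih =>
      set c : ℤ := A + m
      have hc : ((A + (m + 1 : ℕ) : ℤ) : ZMod n) = (c : ZMod n) + 1 := by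
        simp only [c]; push_cast; ring
      have hy' (hyc : y ≠ c) : ∀ j ∈ Ico c (A + n), (j : ZMod n) = y → y ∉ X y := by
        intro j hj hjy
        rcases eq_or_lt_of_le (mem_Ico.1 hj).1 with rfl | hlt
        · exact absurd hjy.symm hyc
        · exact hy j (mem_Ico.2 ⟨by omega, (mem_Ico.1 hj).2⟩) hjy
      rw [hc, hX.succ_eq, hY.succ_eq]
      by_cases hcX : (c : ZMod n) ∈ X c
      · rw [if_pos hcX, if_pos ((hact _).1 hcX), ← hg _ hcX, mem_insert, mem_insert, mem_erase,
          mem_erase]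
        by_cases hyc : y = c
        · simp [hyc]
        · rw [ih (by omega) y (hy' hyc)]
      · rw [if_neg hcX, if_neg (mt (hact _).2 hcX)]
        refine ih (by omega) y fun j hj hjy => ?_
        by_cases hyc : y = c
        · exact hyc ▸ hcX
        · exact hy' hyc j hj hjy
  ext y
  simpa using key n le_rfl y (by simp)

end IsExchange

theorem IsExchange.isGrassmannNecklace [NeZero n] {k : ℕ} {g : ZMod n → ZMod n}
    {X : ZMod n → Finset (ZMod n)} (h : IsExchange g X) (hk : (X 0).card = k) :
    IsGrassmannNecklace n k X :=
  ⟨fun a => (h.card_eq a 0).trans hk, h.subset_insert⟩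

theorem IsGrassmannNecklace.exists_isExchange {k : ℕ} {I : ZMod n → Finset (ZMod n)}
    (hI : IsGrassmannNecklace n k I) : ∃ g, IsExchange g I := by
  obtain ⟨hcard, hsub⟩ := hI
  have herase (a : ZMod n) : (I a).erase a ⊆ I (a + 1) := fun x hx =>
    (mem_insert.1 (hsub a (mem_of_mem_erase hx))).resolve_left (ne_of_mem_erase hx)
  have hnew (a : ZMod n) (ha : a ∈ I a) :
      ∃ x, x ∉ (I a).erase a ∧ I (a + 1) = insert x ((I a).erase a) := by
    obtain ⟨x, hx, hxa⟩ := exists_mem_notMem_of_card_lt_card (s := (I a).erase a)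
      (t := I (a + 1)) (by rw [card_erase_of_mem ha, hcard, hcard]; grind [card_pos])
    refine ⟨x, hxa, (eq_of_subset_of_card_le (insert_subset hx (herase a)) ?_).symm⟩
    rw [card_insert_of_notMem hxa, card_erase_add_one ha, hcard, hcard]
  choose! g hg using hnew
  refine ⟨g, fun a => ?_, fun a ha => (hg a ha).1⟩
  split_ifs with ha
  · exact (hg a ha).2
  · refine (eq_of_subset_of_card_le (fun x hx => ?_) (by rw [hcard, hcard])).symm
    exact herase a (mem_erase.2 ⟨fun hxa => ha (hxa ▸ hx), hx⟩)

theorem necklaceOfPerm_intCast [NeZero n] {f : ℤ → ℤ} (hmap : ∀ i, f (i + n) = f i + n)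
    (A : ℤ) :
    necklaceOfPerm n f A = {b ∈ Ico (A - n) A | A ≤ f b}.image (fun b => (f b : ZMod n)) := by
  have hA := ZMod.val_intCast_add_ediv_mul (n := n) A
  set m := A / n
  have hcast (b : ℤ) : ((f b + m * n : ℤ) : ZMod n) = f b := by simp
  ext x
  simp only [necklaceOfPerm, mem_image, mem_filter, mem_Ico]
  constructor
  · rintro ⟨b, ⟨⟨h1, h2⟩, h3⟩, rfl⟩
    refine ⟨b + m * n, ⟨⟨by linarith, by linarith⟩, ?_⟩, ?_⟩ <;>
      rw [apply_add_mul_eq hmap]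
    · linarith
    · exact hcast b
  · rintro ⟨b, ⟨⟨h1, h2⟩, h3⟩, rfl⟩
    have hb := apply_add_mul_eq hmap (b - m * n) m
    rw [sub_add_cancel] at hb
    refine ⟨b - m * n, ⟨⟨by linarith, by linarith⟩, by linarith⟩, ?_⟩
    rw [hb, hcast]

structure IsBoundedAffine (n : ℕ) (f : ℤ → ℤ) : Prop where
  injective : Function.Injective f
  map_add : ∀ i, f (i + n) = f i + n
  le_apply : ∀ i, i ≤ f i
  apply_le : ∀ i, f i ≤ i + n

namespace IsBoundedAffine

variable {f : ℤ → ℤ}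

theorem intCast_eq_of_intCast_apply_eq (hf : IsBoundedAffine n f) {b c : ℤ}
    (h : (f b : ZMod n) = f c) : (b : ZMod n) = c := by
  obtain ⟨m, hm⟩ := (ZMod.intCast_eq_intCast_iff_dvd_sub _ _ _).1 h
  have : c = b + m * n := hf.injective (by rw [apply_add_mul_eq hf.map_add]; linarith)
  simp [this]

theorem intCast_apply_intCast_val [NeZero n] (hf : IsBoundedAffine n f) (A : ℤ) :
    (f ((A : ZMod n).val) : ZMod n) = f A := by
  conv_rhs => rw [← ZMod.val_intCast_add_ediv_mul (n := n) A, apply_add_mul_eq hf.map_add]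
  simp

theorem surjective [NeZero n] (hf : IsBoundedAffine n f) : Function.Surjective f := by
  have hres : Function.Injective fun a : ZMod n => (f a.val : ZMod n) := fun a b hab => by
    simpa using hf.intCast_eq_of_intCast_apply_eq hab
  intro c
  obtain ⟨a, ha⟩ := Finite.injective_iff_surjective.1 hres c
  obtain ⟨m, hm⟩ := (ZMod.intCast_eq_intCast_iff_dvd_sub _ _ _).1 ha
  exact ⟨a.val + m * n, by rw [apply_add_mul_eq hf.map_add]; linarith⟩

end IsBoundedAffine

theorem isBoundedAffinePermutation_iff [NeZero n] {k : ℕ} {f : ℤ → ℤ} :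
    IsBoundedAffinePermutation n k f ↔
      IsBoundedAffine n f ∧ ∑ i ∈ Icc 1 (n : ℤ), (f i - i) = k * n :=
  ⟨fun ⟨⟨hbij, hmap, hsum⟩, hbd⟩ =>
    ⟨⟨hbij.1, hmap, fun i => (hbd i).1, fun i => (hbd i).2⟩, hsum⟩,
   fun ⟨hf, hsum⟩ =>
    ⟨⟨⟨hf.injective, hf.surjective⟩, hf.map_add, hsum⟩,
      fun i => ⟨hf.le_apply i, hf.apply_le i⟩⟩⟩

/-- `(z - 1).val + 1` is the representative of `z` in `[1, n]`, so an index `A` with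
`A ∈ X A` is sent to the representative of `g A` in `(A, A + n]`. -/
def exchangePerm (g : ZMod n → ZMod n) (X : ZMod n → Finset (ZMod n)) (A : ℤ) : ℤ :=
  if (A : ZMod n) ∈ X A then A + ((g A - A - 1 : ZMod n).val + 1) else A

section exchangePerm

variable {g : ZMod n → ZMod n} {X : ZMod n → Finset (ZMod n)}

theorem exchangePerm_add (A : ℤ) : exchangePerm g X (A + n) = exchangePerm g X A + n := by
  simp only [exchangePerm, Int.cast_add, Int.cast_natCast, ZMod.natCast_self, add_zero]
  split_ifs <;> ring

theorem le_exchangePerm (A : ℤ) : A ≤ exchangePerm g X A := by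
  unfold exchangePerm; split_ifs <;> omega

theorem exchangePerm_le [NeZero n] (A : ℤ) : exchangePerm g X A ≤ A + n := by
  unfold exchangePerm
  split_ifs
  · have := ZMod.val_lt (g A - A - 1 : ZMod n); omega
  · omega

theorem exchangePerm_eq_self_iff {A : ℤ} : exchangePerm g X A = A ↔ (A : ZMod n) ∉ X A := by
  unfold exchangePerm; split_ifs with h <;> simp [h]; omega

theorem intCast_exchangePerm [NeZero n] {A : ℤ} (h : (A : ZMod n) ∈ X A) :
    (exchangePerm g X A : ZMod n) = g A := by
  simp only [exchangePerm, if_pos h]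
  push_cast
  rw [ZMod.natCast_zmod_val]
  ring

/-- If `A < B` were both sent to `c`, the residue of `c`, entering at step `A`, would persist up
to `X B`; this contradicts `B ∉ X B` when `c = B`, and `g B ∉ (X B).erase B` otherwise. -/
theorem IsExchange.exchangePerm_injective [NeZero n] (h : IsExchange g X) :
    Function.Injective (exchangePerm g X) := by
  refine Function.Injective.of_lt_imp_ne fun A B hAB hc => ?_
  have hB := le_exchangePerm (g := g) (X := X) B
  have hAact : (A : ZMod n) ∈ X A := by
    by_contra hA
    rw [exchangePerm_eq_self_iff.2 hA] at hc
    omega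
  have hcA := exchangePerm_le (g := g) (X := X) A
  have hcA' : exchangePerm g X A ≠ A := mt exchangePerm_eq_self_iff.1 (not_not.2 hAact)
  set c := exchangePerm g X A
  have hmem : (c : ZMod n) ∈ X (A + 1 : ℤ) := by
    rw [Int.cast_add, Int.cast_one, h.succ_eq, if_pos hAact, intCast_exchangePerm hAact]
    exact mem_insert_self _ _
  have hcB : (c : ZMod n) ∈ X B :=
    mem_of_forall_intCast_ne h.subset_insert (by omega) hmem fun j hj hjc => by
      rw [mem_Ico] at hj
      exact absurd (Int.eq_of_intCast_zmod_eq hjc (by omega) (by omega)) (by omega)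
  by_cases hBact : (B : ZMod n) ∈ X B
  · apply h.notMem_erase _ hBact
    rw [← intCast_exchangePerm (g := g) hBact, ← hc]
    refine mem_erase.2 ⟨fun hcb => ?_, hcB⟩
    have := Int.eq_of_intCast_zmod_eq hcb (by omega) (by omega)
    exact exchangePerm_eq_self_iff.1 (hc ▸ this) hBact
  · rw [hc, exchangePerm_eq_self_iff.2 hBact] at hcB
    exact hBact hcB

theorem IsExchange.isBoundedAffine_exchangePerm [NeZero n] (h : IsExchange g X) :
    IsBoundedAffine n (exchangePerm g X) :=
  ⟨h.exchangePerm_injective, exchangePerm_add, le_exchangePerm, exchangePerm_le⟩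

end exchangePerm

namespace IsBoundedAffine

variable [NeZero n] {f : ℤ → ℤ}

theorem card_necklaceOfPerm_intCast (hf : IsBoundedAffine n f) (A : ℤ) :
    (necklaceOfPerm n f A).card = #{b ∈ Ico (A - n) A | A ≤ f b} := by
  rw [necklaceOfPerm_intCast hf.map_add]
  refine card_image_of_injOn fun b hb c hc hbc => ?_
  simp only [coe_filter, Set.mem_ofPred_eq, mem_Ico] at hb hc
  exact Int.eq_of_intCast_zmod_eq (hf.intCast_eq_of_intCast_apply_eq hbc) (by omega) (by omega)

theorem intCast_mem_necklaceOfPerm_iff (hf : IsBoundedAffine n f) (A : ℤ) :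
    (A : ZMod n) ∈ necklaceOfPerm n f A ↔ f A ≠ A := by
  simp only [necklaceOfPerm_intCast hf.map_add, mem_image, mem_filter, mem_Ico]
  constructor
  · rintro ⟨b, ⟨⟨h1, h2⟩, h3⟩, hb⟩ hA
    have := Int.eq_of_intCast_zmod_eq hb (by linarith [hf.apply_le b]) (by omega)
    have := hf.injective (this.trans hA.symm)
    omega
  · intro hA
    obtain ⟨b, hb⟩ := hf.surjective A
    have hbA : b ≠ A := fun h => hA (h ▸ hb)
    have := hf.le_apply b
    have := hf.apply_le b
    exact ⟨b, ⟨⟨by omega, by omega⟩, hb.ge⟩, by rw [hb]⟩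

theorem necklaceOfPerm_add_one_of_apply_eq (hf : IsBoundedAffine n f) {A : ℤ} (hA : f A = A) :
    necklaceOfPerm n f (A + 1 : ℤ) = necklaceOfPerm n f A := by
  ext x
  simp only [necklaceOfPerm_intCast hf.map_add, mem_image, mem_filter, mem_Ico]
  constructor
  · rintro ⟨b, ⟨⟨h1, h2⟩, h3⟩, rfl⟩
    have hbA : b ≠ A := by rintro rfl; omega
    exact ⟨b, ⟨⟨by omega, by omega⟩, by omega⟩, rfl⟩
  · rintro ⟨b, ⟨⟨h1, h2⟩, h3⟩, rfl⟩
    have hfb : f b ≠ A := fun h => by have := hf.injective (h.trans hA.symm); omega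
    have := hf.apply_le b
    exact ⟨b, ⟨⟨by omega, by omega⟩, by omega⟩, rfl⟩

theorem necklaceOfPerm_add_one_of_apply_ne (hf : IsBoundedAffine n f) {A : ℤ} (hA : f A ≠ A) :
    necklaceOfPerm n f (A + 1 : ℤ) = insert (f A : ZMod n) ((necklaceOfPerm n f A).erase A) := by
  ext x
  simp only [necklaceOfPerm_intCast hf.map_add, mem_insert, mem_erase, mem_image, mem_filter,
    mem_Ico]
  have hAA := hf.le_apply A
  have hn := NeZero.pos n
  constructor
  · rintro ⟨b, ⟨⟨h1, h2⟩, h3⟩, rfl⟩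
    rcases eq_or_ne b A with rfl | hbA
    · exact Or.inl rfl
    · have := hf.apply_le b
      refine Or.inr ⟨fun h => ?_, b, ⟨⟨by omega, by omega⟩, by omega⟩, rfl⟩
      have := Int.eq_of_intCast_zmod_eq h (by omega) (by omega)
      omega
  · rintro (rfl | ⟨hxA, b, ⟨⟨h1, h2⟩, h3⟩, rfl⟩)
    · exact ⟨A, ⟨⟨by omega, by omega⟩, by omega⟩, rfl⟩
    · have hfb : f b ≠ A := fun h => hxA (by rw [h])
      have := hf.apply_le b
      exact ⟨b, ⟨⟨by omega, by omega⟩, by omega⟩, rfl⟩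

theorem intCast_apply_notMem_erase (hf : IsBoundedAffine n f) (A : ℤ) :
    (f A : ZMod n) ∉ (necklaceOfPerm n f A).erase A := by
  simp only [necklaceOfPerm_intCast hf.map_add, mem_erase, mem_image, mem_filter, mem_Ico]
  rintro ⟨hne, b, ⟨⟨h1, h2⟩, h3⟩, hb⟩
  have hbA : b + n = A := Int.eq_of_intCast_zmod_eq (n := n)
    (by rw [Int.cast_add, Int.cast_natCast, ZMod.natCast_self, add_zero,
      hf.intCast_eq_of_intCast_apply_eq hb]) (by omega) (by omega)
  have : f b = A := le_antisymm (hbA ▸ hf.apply_le b) h3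
  exact hne (by rw [← hb, this])

theorem isExchange_necklaceOfPerm (hf : IsBoundedAffine n f) :
    IsExchange (fun a => (f a.val : ZMod n)) (necklaceOfPerm n f) where
  succ_eq a := by
    obtain ⟨A, rfl⟩ := ZMod.intCast_surjective a
    have hA1 : (A : ZMod n) + 1 = ((A + 1 : ℤ) : ZMod n) := by push_cast; rfl
    rw [hA1, hf.intCast_apply_intCast_val]
    by_cases hA : f A = A
    · rw [if_neg ((hf.intCast_mem_necklaceOfPerm_iff A).not.2 (not_not.2 hA)),
        hf.necklaceOfPerm_add_one_of_apply_eq hA]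
    · rw [if_pos ((hf.intCast_mem_necklaceOfPerm_iff A).2 hA),
        hf.necklaceOfPerm_add_one_of_apply_ne hA]
  notMem_erase a _ := by
    obtain ⟨A, rfl⟩ := ZMod.intCast_surjective a
    rw [hf.intCast_apply_intCast_val]
    exact hf.intCast_apply_notMem_erase A

theorem exchangePerm_necklaceOfPerm (hf : IsBoundedAffine n f) :
    exchangePerm (fun a => (f a.val : ZMod n)) (necklaceOfPerm n f) = f := by
  funext A
  by_cases hA : f A = A
  · rw [exchangePerm_eq_self_iff.2 ((hf.intCast_mem_necklaceOfPerm_iff A).not.2 (not_not.2 hA)),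
      hA]
  · set g := fun a : ZMod n => (f a.val : ZMod n)
    have hmem := (hf.intCast_mem_necklaceOfPerm_iff A).2 hA
    have h1 := exchangePerm_le (g := g) (X := necklaceOfPerm n f) A
    have h2 := le_exchangePerm (g := g) (X := necklaceOfPerm n f) A
    have h3 := mt (exchangePerm_eq_self_iff (g := g)).1 (not_not.2 hmem)
    have := hf.le_apply A
    have := hf.apply_le A
    refine Int.eq_of_intCast_zmod_eq (n := n) ?_ (by omega) (by omega)
    rw [intCast_exchangePerm hmem]
    exact hf.intCast_apply_intCast_val A

theorem card_necklaceOfPerm_mul (hf : IsBoundedAffine n f) (a : ZMod n) :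
    ((necklaceOfPerm n f a).card : ℤ) * n = ∑ i ∈ Icc 1 (n : ℤ), (f i - i) := by
  calc ((necklaceOfPerm n f a).card : ℤ) * n
      = ∑ A ∈ Icc 1 (n : ℤ), ((necklaceOfPerm n f A).card : ℤ) := by
        rw [sum_congr rfl fun A _ => by rw [hf.isExchange_necklaceOfPerm.card_eq A a]]
        simp [mul_comm]
    _ = ∑ A ∈ Icc 1 (n : ℤ), (#{b ∈ Ico (A - n) A | A ≤ f b} : ℤ) := by
        simp only [hf.card_necklaceOfPerm_intCast]
    _ = ∑ i ∈ Icc 1 (n : ℤ), (f i - i) :=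
        sum_card_filter_le_apply hf.map_add hf.le_apply hf.apply_le

end IsBoundedAffine

namespace IsExchange

variable {g g' : ZMod n → ZMod n} {X : ZMod n → Finset (ZMod n)}

theorem exchangePerm_congr (h : IsExchange g X) (h' : IsExchange g' X) :
    exchangePerm g X = exchangePerm g' X := by
  funext A
  unfold exchangePerm
  split_ifs with hA
  · rw [h.apply_eq_of_mem h' hA]
  · rfl

theorem necklaceOfPerm_exchangePerm [NeZero n] (h : IsExchange g X) :
    necklaceOfPerm n (exchangePerm g X) = X := by
  have hf := h.isBoundedAffine_exchangePerm
  have hact (a : ZMod n) : a ∈ necklaceOfPerm n (exchangePerm g X) a ↔ a ∈ X a := by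
    obtain ⟨A, rfl⟩ := ZMod.intCast_surjective a
    rw [hf.intCast_mem_necklaceOfPerm_iff, Ne, exchangePerm_eq_self_iff, not_not]
  refine hf.isExchange_necklaceOfPerm.eq h hact fun a ha => ?_
  obtain ⟨A, rfl⟩ := ZMod.intCast_surjective a
  rw [hf.intCast_apply_intCast_val, intCast_exchangePerm ((hact _).1 ha)]

end IsExchange

/-- The map `f ↦ (I_a)` with `I_a = {f b mod n : b < a, f b ≥ a}` is a bijection from the
set of `(k,n)` bounded affine permutations onto the set of `(k,n)` Grassmann necklaces. -/
theorem boundedAffinePermutation_to_grassmannNecklace_bijOn (n k : ℕ) (hn : 0 < n) :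
    Set.BijOn (necklaceOfPerm n)
      {f : ℤ → ℤ | IsBoundedAffinePermutation n k f}
      {I : ZMod n → Finset (ZMod n) | IsGrassmannNecklace n k I} := by
  have : NeZero n := ⟨hn.ne'⟩
  refine ⟨fun f hf => ?_, fun f hf f' hf' hff' => ?_, fun I hI => ?_⟩
  · obtain ⟨hfb, hsum⟩ := isBoundedAffinePermutation_iff.1 hf
    refine hfb.isExchange_necklaceOfPerm.isGrassmannNecklace ?_
    have hcard := hfb.card_necklaceOfPerm_mul 0
    rw [hsum] at hcard
    exact_mod_cast mul_right_cancel₀ (by exact_mod_cast hn.ne') hcard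
  · have hfb := (isBoundedAffinePermutation_iff.1 hf).1
    have hfb' := (isBoundedAffinePermutation_iff.1 hf').1
    rw [← hfb.exchangePerm_necklaceOfPerm, ← hfb'.exchangePerm_necklaceOfPerm, hff']
    exact (hff' ▸ hfb.isExchange_necklaceOfPerm).exchangePerm_congr hfb'.isExchange_necklaceOfPerm
  · obtain ⟨g, hg⟩ := hI.exists_isExchange
    have hfb := hg.isBoundedAffine_exchangePerm
    refine ⟨exchangePerm g I, isBoundedAffinePermutation_iff.2 ⟨hfb, ?_⟩,
      hg.necklaceOfPerm_exchangePerm⟩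
    rw [← hfb.card_necklaceOfPerm_mul 0, hg.necklaceOfPerm_exchangePerm, hI.1 0]
end

section
/- The endomorphism algebra End_{Δ_n}(U_{[n]}) has complex dimension n². -/
open Matrix

/-!
Write `e_c` for the standard basis vectors. Applying `E_j s₁ = s₁ E_{j-1}` to `e_c` gives
`E_j e_{c+1} = s₁ E_{j-1} e_c`, hence `E_j e_c = s₁^c E_{j-c} e_0`: an endomorphism is determined
by the first columns `E_j e_0`. Conversely, since `s₁^n = 0`, every choice of these `n` vectors
in `ℂⁿ` defines an endomorphism by the same formula, so `End_{Δ_n}(U_{[n]}) ≅ (ℂⁿ)^{ℤ_n}`.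
-/

/-- The nilpotent shift matrix `s₁` sending the basis vector `v_j` to `v_{j+1}` for
`j < n` and `v_n` to `0` (indices `0, ..., n-1` in `Fin n`). -/
noncomputable def shiftMatrix (n : ℕ) : Matrix (Fin n) (Fin n) ℂ :=
  Matrix.of fun r c => if (r : ℕ) = (c : ℕ) + 1 then 1 else 0

/-- The endomorphism algebra `End_{Δ_n}(U_{[n]})`: tuples `(E_i)_{i ∈ ℤ_n}` of `n × n`
complex matrices with `E_{i+1} s₁ = s₁ E_i` for all `i`, as a `ℂ`-subspace of the space
of all matrix tuples. -/
noncomputable def cyclicEnd (n : ℕ) : Submodule ℂ (ZMod n → Matrix (Fin n) (Fin n) ℂ) where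
  carrier := {E | ∀ i, E (i + 1) * shiftMatrix n = shiftMatrix n * E i}
  add_mem' := by
    intro E F hE hF i
    simp only [Pi.add_apply, Matrix.add_mul, Matrix.mul_add, hE i, hF i]
  zero_mem' := by
    intro i
    simp
  smul_mem' := by
    intro c E hE i
    simp only [Pi.smul_apply, Matrix.smul_mul, Matrix.mul_smul, hE i]


/-- The basis vector `v_c` for `c < n`, and `0` for `c ≥ n`, so that `s₁` shifts it without
any case distinction. -/
def natSingle (n c : ℕ) : Fin n → ℂ :=
  fun r => if (r : ℕ) = c then 1 else 0

lemma natSingle_eq_single {n : ℕ} (c : Fin n) : natSingle n c = Pi.single c 1 := by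
  ext r
  simp [natSingle, Pi.single_apply, Fin.val_inj]

lemma natSingle_eq_zero {n c : ℕ} (hc : n ≤ c) : natSingle n c = 0 := by
  ext r
  simp only [natSingle, Pi.zero_apply, ite_eq_right_iff]
  omega

lemma matrix_ext_of_mulVec_natSingle {n : ℕ} {A B : Matrix (Fin n) (Fin n) ℂ}
    (h : ∀ c : Fin n, A *ᵥ natSingle n c = B *ᵥ natSingle n c) : A = B :=
  ext_of_mulVec_single fun c => by simpa only [natSingle_eq_single] using h c

lemma shiftMatrix_mulVec_natSingle (n c : ℕ) :
    shiftMatrix n *ᵥ natSingle n c = natSingle n (c + 1) := by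
  ext r
  simp only [mulVec, dotProduct, shiftMatrix, natSingle, of_apply, mul_ite, mul_one, mul_zero]
  by_cases hr : (r : ℕ) = c + 1
  · rw [Finset.sum_eq_single ⟨c, by omega⟩ (fun k _ hk => by simp [Fin.ext_iff] at hk; simp [hk])
      (by simp)]
    simp [hr]
  · rw [if_neg hr]
    exact Finset.sum_eq_zero fun k _ => by split_ifs <;> first | rfl | omega

lemma shiftMatrix_pow_mulVec_natSingle_zero (n c : ℕ) :
    shiftMatrix n ^ c *ᵥ natSingle n 0 = natSingle n c := by
  induction c with
  | zero => simp
  | succ c ih => rw [pow_succ', ← mulVec_mulVec, ih, shiftMatrix_mulVec_natSingle]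

lemma shiftMatrix_pow_self (n : ℕ) : shiftMatrix n ^ n = 0 :=
  matrix_ext_of_mulVec_natSingle fun c => by
    rw [← shiftMatrix_pow_mulVec_natSingle_zero, mulVec_mulVec, ← pow_add,
      shiftMatrix_pow_mulVec_natSingle_zero, natSingle_eq_zero (by omega), zero_mulVec]

lemma shiftMatrix_pow_eq_zero {n c : ℕ} (hc : n ≤ c) : shiftMatrix n ^ c = 0 :=
  pow_eq_zero_of_le hc (shiftMatrix_pow_self n)

lemma mulVec_natSingle_of_mem_cyclicEnd {n : ℕ} {E : ZMod n → Matrix (Fin n) (Fin n) ℂ}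
    (hE : E ∈ cyclicEnd n) (j : ZMod n) (c : ℕ) :
    E j *ᵥ natSingle n c = shiftMatrix n ^ c *ᵥ (E (j - c) *ᵥ natSingle n 0) := by
  induction c generalizing j with
  | zero => simp
  | succ c ih =>
    have hcomm : E j * shiftMatrix n = shiftMatrix n * E (j - 1) := by
      simpa using hE (j - 1)
    rw [← shiftMatrix_mulVec_natSingle, mulVec_mulVec, hcomm, ← mulVec_mulVec, ih,
      mulVec_mulVec, ← pow_succ', Nat.cast_succ, sub_sub, add_comm (1 : ZMod n)]

noncomputable def ofFirstColumns {n : ℕ} (f : ZMod n → Fin n → ℂ) (j : ZMod n) :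
    Matrix (Fin n) (Fin n) ℂ :=
  of fun r c => (shiftMatrix n ^ (c : ℕ) *ᵥ f (j - (c : ℕ))) r

lemma ofFirstColumns_mulVec_natSingle {n : ℕ} (f : ZMod n → Fin n → ℂ) (j : ZMod n) (c : ℕ) :
    ofFirstColumns f j *ᵥ natSingle n c = shiftMatrix n ^ c *ᵥ f (j - c) := by
  by_cases hc : c < n
  · rw [show c = ((⟨c, hc⟩ : Fin n) : ℕ) from rfl, natSingle_eq_single, mulVec_single_one]
    rfl
  · rw [natSingle_eq_zero (not_lt.mp hc), shiftMatrix_pow_eq_zero (not_lt.mp hc), mulVec_zero,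
      zero_mulVec]

lemma ofFirstColumns_mem_cyclicEnd {n : ℕ} (f : ZMod n → Fin n → ℂ) :
    ofFirstColumns f ∈ cyclicEnd n := fun i =>
  matrix_ext_of_mulVec_natSingle fun c => by
    rw [← mulVec_mulVec, ← mulVec_mulVec, shiftMatrix_mulVec_natSingle,
      ofFirstColumns_mulVec_natSingle, ofFirstColumns_mulVec_natSingle, mulVec_mulVec, ← pow_succ',
      Nat.cast_succ, add_sub_add_right_eq_sub]

noncomputable def cyclicEndEquivFirstColumns (n : ℕ) :
    cyclicEnd n ≃ₗ[ℂ] (ZMod n → Fin n → ℂ) where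
  toFun E j := E.1 j *ᵥ natSingle n 0
  map_add' E F := funext fun j => add_mulVec _ _ _
  map_smul' a E := funext fun j => smul_mulVec a _ _
  invFun f := ⟨ofFirstColumns f, ofFirstColumns_mem_cyclicEnd f⟩
  left_inv E := Subtype.ext <| funext fun j => matrix_ext_of_mulVec_natSingle fun c => by
    rw [ofFirstColumns_mulVec_natSingle, mulVec_natSingle_of_mem_cyclicEnd E.2]
  right_inv f := funext fun j => by
    simpa using ofFirstColumns_mulVec_natSingle f j 0

/-- The endomorphism algebra `End_{Δ_n}(U_{[n]})` has complex dimension `n²`. -/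
theorem finrank_cyclicEnd (n : ℕ) (hn : 0 < n) :
    Module.finrank ℂ (cyclicEnd n) = n ^ 2 := by
  have : NeZero n := ⟨hn.ne'⟩
  rw [(cyclicEndEquivFirstColumns n).finrank_eq]
  simp [Module.finrank_pi_fintype, ZMod.card, sq]
end

section
/- For a (1,n) Grassmann necklace i_• = (i_1,...,i_n), the length of the associated bounded affine permutation f_{i_•} equals n minus the number of distinct entries of i_•. -/
/-- The length of an affine permutation:
`l(f) = #{(i,j) ∈ [n] × ℤ : i < j and f i > f j}`. -/
noncomputable def affineLength (n : ℕ) (f : ℤ → ℤ) : ℕ :=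
  Nat.card {p : ℤ × ℤ // 1 ≤ p.1 ∧ p.1 ≤ n ∧ p.1 < p.2 ∧ f p.2 < f p.1}

/-- For a `(1,n)` Grassmann necklace `i_•` (a sequence `(i_a)` in `ZMod n` with
`i_a ≠ a → i_{a+1} = i_a`), the length of the associated bounded affine permutation
`f_{i_•}` equals `n` minus the number of distinct entries of `i_•`.  Here `f` is the
function characterized by: `f` is `n`-periodic (`f (t+n) = f t + n`), `f a = a` when
`i_a ≠ a`, and when `i_a = a`, `f a ≡ i_{a+1} mod n` with `a < f a ≤ a + n`. -/
theorem length_assocPerm_necklace_k_one (n : ℕ) [NeZero n]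
    (i : ZMod n → ZMod n) (hi : ∀ a, i a ≠ a → i (a + 1) = i a)
    (f : ℤ → ℤ)
    (hper : ∀ t : ℤ, f (t + n) = f t + n)
    (h1 : ∀ a : ℤ, i (a : ZMod n) ≠ (a : ZMod n) → f a = a)
    (h2 : ∀ a : ℤ, i (a : ZMod n) = (a : ZMod n) →
      ((f a : ZMod n) = i ((a : ZMod n) + 1) ∧ a < f a ∧ f a ≤ a + n)) :
    affineLength n f = n - (Finset.univ.image i).card := by
  classical
  have hn : 0 < n := Nat.pos_of_ne_zero (NeZero.ne n)
  -- val of x - 1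
  have hval : ∀ x : ZMod n, x ≠ 0 → (x - 1).val = x.val - 1 := by
    intro x hx
    have h1x : 1 ≤ x.val := Nat.one_le_iff_ne_zero.mpr (fun h => hx ((ZMod.val_eq_zero x).mp h))
    have hxlt : x.val < n := ZMod.val_lt x
    have hrep : x - 1 = ((x.val - 1 : ℕ) : ZMod n) := by
      rw [Nat.cast_sub h1x, ZMod.natCast_val, ZMod.cast_id, Nat.cast_one]
    rw [hrep, ZMod.val_cast_of_lt (by omega)]
  -- idempotence of i
  have hC : ∀ b : ZMod n, i (i b) = i b := by
    have key : ∀ k : ℕ, ∀ b : ZMod n, (i b - b).val ≤ k → i (i b) = i b := by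
      intro k
      induction k with
      | zero =>
        intro b hb
        have h0 : i b - b = 0 := (ZMod.val_eq_zero _).mp (Nat.le_zero.mp hb)
        have hb' : i b = b := sub_eq_zero.mp h0
        simp [hb']
      | succ k ih =>
        intro b hb
        by_cases h : i b = b
        · simp [h]
        · have h3 := hi b h
          have h4 : (i (b + 1) - (b + 1)).val ≤ k := by
            rw [h3, show i b - (b + 1) = (i b - b) - 1 by ring,
              hval _ (sub_ne_zero.mpr h)]
            omega
          have := ih (b + 1) h4
          rwa [h3] at this
    intro b; exact key _ b le_rfl
  -- the image of i is the fixed-point set S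
  set S : Finset (ZMod n) := Finset.univ.filter (fun a : ZMod n => i a = a) with hSdef
  have himg : Finset.univ.image i = S := by
    ext a
    simp only [hSdef, Finset.mem_image, Finset.mem_filter, Finset.mem_univ, true_and]
    constructor
    · rintro ⟨b, -, rfl⟩; exact hC b
    · intro h; exact ⟨a, h⟩
  -- congruent integers that are strictly ordered differ by at least n
  have habs : ∀ x y : ℤ, (x : ZMod n) = (y : ZMod n) → x < y → x + n ≤ y := by
    intro x y h hlt
    have hd : (n : ℤ) ∣ y - x := Int.ModEq.dvd ((ZMod.intCast_eq_intCast_iff x y n).mp h)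
    have := Int.le_of_dvd (by omega) hd
    omega
  -- the integer lift A of S inside [1, n]
  set A : Finset ℤ := (Finset.Icc (1 : ℤ) (n : ℤ)).filter
      (fun t => i (t : ZMod n) = (t : ZMod n)) with hAdef
  have hAmem : ∀ t : ℤ, t ∈ A ↔ (1 ≤ t ∧ t ≤ n ∧ i (t : ZMod n) = (t : ZMod n)) := by
    intro t
    simp [hAdef, Finset.mem_filter, Finset.mem_Icc, and_assoc]
  have hcardAS : A.card = S.card := by
    refine Finset.card_bij (fun t _ => (t : ZMod n)) ?_ ?_ ?_
    · intro t ht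
      simp only [hSdef, Finset.mem_filter, Finset.mem_univ, true_and]
      exact ((hAmem t).mp ht).2.2
    · intro t ht t' ht' hcast
      rw [hAmem] at ht ht'
      rcases lt_trichotomy t t' with h | h | h
      · have := habs t t' hcast h; omega
      · exact h
      · have := habs t' t hcast.symm h; omega
    · intro s hs
      simp only [hSdef, Finset.mem_filter, Finset.mem_univ, true_and] at hs
      have hvlt : s.val < n := ZMod.val_lt s
      set t₀ : ℤ := if s.val = 0 then (n : ℤ) else (s.val : ℤ) with ht₀
      have hcast : ((t₀ : ℤ) : ZMod n) = s := by
        rw [ht₀]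
        split_ifs with h0
        · have : s = 0 := (ZMod.val_eq_zero s).mp h0
          simp [this]
        · push_cast
          rw [ZMod.natCast_val, ZMod.cast_id]
      refine ⟨t₀, ?_, hcast⟩
      rw [hAmem]
      refine ⟨?_, ?_, by rw [hcast]; exact hs⟩ <;>
        · rw [ht₀]; split_ifs with h0 <;> omega
  -- propagation lemma
  have hprop : ∀ s : ℤ, ∀ k : ℕ, 1 ≤ k →
      (∀ j : ℕ, 1 ≤ j → j < k → i ((s + j : ℤ) : ZMod n) ≠ ((s + j : ℤ) : ZMod n)) →
      i ((s + k : ℤ) : ZMod n) = i ((s : ZMod n) + 1) := by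
    intro s k
    induction k with
    | zero => intro h; omega
    | succ k ih =>
      intro _ hj
      by_cases hk : k = 0
      · subst hk
        have : ((s + (1 : ℕ) : ℤ) : ZMod n) = (s : ZMod n) + 1 := by push_cast; ring
        rw [this]
      · have h1k : 1 ≤ k := by omega
        have hIH := ih h1k (fun j hj1 hj2 => hj j hj1 (by omega))
        have hQ := hj k h1k (by omega)
        have hstep := hi _ hQ
        have hcast : ((s + (k + 1 : ℕ) : ℤ) : ZMod n) = ((s + (k : ℕ) : ℤ) : ZMod n) + 1 := by
          push_cast; ring
        rw [hcast, hstep, hIH]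
  -- minimality: no fixed point strictly between s and f s
  have hmin : ∀ s t : ℤ, i (s : ZMod n) = (s : ZMod n) → s < t → t < f s →
      i (t : ZMod n) ≠ (t : ZMod n) := by
    intro s t hs hst htf hPt
    obtain ⟨hfc, hsf, hfn⟩ := h2 s hs
    have hwit : 1 ≤ (t - s).toNat ∧ i ((s + ((t - s).toNat : ℕ) : ℤ) : ZMod n)
        = ((s + ((t - s).toNat : ℕ) : ℤ) : ZMod n) :=
      ⟨by omega, by rw [show (s + ((t - s).toNat : ℕ) : ℤ) = t by omega]; exact hPt⟩
    have hK : ∃ k : ℕ, 1 ≤ k ∧ i ((s + k : ℤ) : ZMod n) = ((s + k : ℤ) : ZMod n) :=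
      ⟨(t - s).toNat, hwit⟩
    set k₀ := Nat.find hK with hk₀def
    obtain ⟨hk1, hk2⟩ := Nat.find_spec hK
    have hk₀t : s + k₀ ≤ t := by
      have := Nat.find_min' hK hwit
      omega
    have hIi : i ((s + k₀ : ℤ) : ZMod n) = i ((s : ZMod n) + 1) :=
      hprop s k₀ hk1 (fun j hj1 hj2 hPj => Nat.find_min hK hj2 ⟨hj1, hPj⟩)
    have hcong : ((s + k₀ : ℤ) : ZMod n) = ((f s : ℤ) : ZMod n) := by
      rw [← hk2, hIi, hfc]
    have := habs (s + k₀) (f s) hcong (by omega)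
    omega
  -- f s is a fixed point
  have hfS : ∀ s : ℤ, i (s : ZMod n) = (s : ZMod n) →
      i ((f s : ℤ) : ZMod n) = ((f s : ℤ) : ZMod n) := by
    intro s hs
    obtain ⟨hfc, -, -⟩ := h2 s hs
    rw [hfc]; exact hC _
  -- f b ≥ b always
  have hge : ∀ b : ℤ, b ≤ f b := by
    intro b
    by_cases hb : i (b : ZMod n) = (b : ZMod n)
    · exact (h2 b hb).2.1.le
    · rw [h1 b hb]
  -- f s ≤ t for fixed points s < t
  have hfle : ∀ s t : ℤ, i (s : ZMod n) = (s : ZMod n) → i (t : ZMod n) = (t : ZMod n) →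
      s < t → f s ≤ t := by
    intro s t hs ht hst
    by_contra hlt
    exact hmin s t hs hst (by omega) ht
  -- A is nonempty
  have hAne : A.Nonempty := by
    rw [← Finset.card_pos, hcardAS, Finset.card_pos]
    exact ⟨i 0, by simp [hSdef, hC 0]⟩
  set s₁ := A.min' hAne with hs₁def
  have hs₁A : s₁ ∈ A := A.min'_mem hAne
  have hs₁le : ∀ s ∈ A, s₁ ≤ s := fun s hs => A.min'_le s hs
  rw [hAmem] at hs₁A
  have htopfix : i ((s₁ + n : ℤ) : ZMod n) = ((s₁ + n : ℤ) : ZMod n) := by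
    have : ((s₁ + n : ℤ) : ZMod n) = (s₁ : ZMod n) := by push_cast; simp
    rw [this]; exact hs₁A.2.2
  -- image of A under f
  have hfA : ∀ s ∈ A, f s ∈ A.erase s₁ ∪ {s₁ + (n : ℤ)} := by
    intro s hsA
    have hs₁s : s₁ ≤ s := hs₁le s hsA
    rw [hAmem] at hsA
    obtain ⟨hs1, hsn, hPs⟩ := hsA
    have hfs := hfS s hPs
    obtain ⟨-, hlt, hub⟩ := h2 s hPs
    have hle : f s ≤ s₁ + n := hfle s (s₁ + n) hPs htopfix (by omega)
    rcases eq_or_lt_of_le hle with heq | hltn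
    · exact Finset.mem_union_right _ (by simp [heq])
    · apply Finset.mem_union_left
      have hfn : f s ≤ n := by
        by_contra hgt
        push_neg at hgt
        have hfix' : i ((f s - n : ℤ) : ZMod n) = ((f s - n : ℤ) : ZMod n) := by
          have e : ((f s - n : ℤ) : ZMod n) = ((f s : ℤ) : ZMod n) := by push_cast; simp
          rw [e]; exact hfs
        have hmemA : f s - n ∈ A := (hAmem _).mpr ⟨by omega, by omega, hfix'⟩
        have := hs₁le _ hmemA
        omega
      refine Finset.mem_erase.mpr ⟨by omega, (hAmem _).mpr ⟨by omega, hfn, hfs⟩⟩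
  -- f is injective on A
  have hinjA : ∀ s ∈ A, ∀ t ∈ A, f s = f t → s = t := by
    intro s hs t ht heq
    rw [hAmem] at hs ht
    rcases lt_trichotomy s t with h | h | h
    · have := hfle s t hs.2.2 ht.2.2 h
      have := (h2 t ht.2.2).2.1
      omega
    · exact h
    · have := hfle t s ht.2.2 hs.2.2 h
      have := (h2 s hs.2.2).2.1
      omega
  -- the image equals A.erase s₁ ∪ {s₁ + n}
  have himage : A.image f = A.erase s₁ ∪ {s₁ + (n : ℤ)} := by
    apply Finset.eq_of_subset_of_card_le
    · intro x hx
      obtain ⟨s, hs, rfl⟩ := Finset.mem_image.mp hx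
      exact hfA s hs
    · have hd : Disjoint (A.erase s₁) {s₁ + (n : ℤ)} := by
        simp only [Finset.disjoint_singleton_right, Finset.mem_erase, hAmem]
        rintro ⟨-, -, h, -⟩
        omega
      rw [Finset.card_union_of_disjoint hd, Finset.card_singleton,
        Finset.card_erase_of_mem ((hAmem s₁).mpr hs₁A), Finset.card_image_of_injOn hinjA]
      have := Finset.card_pos.mpr hAne
      omega
  -- the sum identity
  have hsum : (∑ s ∈ A, f s) = (∑ s ∈ A, s) + n := by
    have h0 : (∑ x ∈ A.image f, (x : ℤ)) = ∑ s ∈ A, f s := Finset.sum_image hinjA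
    have hd : Disjoint (A.erase s₁) {s₁ + (n : ℤ)} := by
      simp only [Finset.disjoint_singleton_right, Finset.mem_erase, hAmem]
      rintro ⟨-, -, h, -⟩
      omega
    have h1' : (∑ x ∈ A.erase s₁, x) + s₁ = ∑ x ∈ A, x :=
      Finset.sum_erase_add A _ ((hAmem s₁).mpr hs₁A)
    rw [← h0, himage, Finset.sum_union hd, Finset.sum_singleton]
    omega
  -- the inversion set as a Finset
  set F : Finset (ℤ × ℤ) :=
    A.biUnion (fun s => (Finset.Ioo s (f s)).image (fun b => (s, b))) with hFdef
  have hFmem : ∀ p : ℤ × ℤ, p ∈ F ↔ (1 ≤ p.1 ∧ p.1 ≤ n ∧ p.1 < p.2 ∧ f p.2 < f p.1) := by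
    intro p
    simp only [hFdef, Finset.mem_biUnion, Finset.mem_image, Finset.mem_Ioo]
    constructor
    · rintro ⟨s, hsA, b, ⟨hsb, hbf⟩, rfl⟩
      rw [hAmem] at hsA
      obtain ⟨hs1, hsn, hPs⟩ := hsA
      have hbfix := hmin s b hPs hsb hbf
      have hfb : f b = b := h1 b hbfix
      refine ⟨hs1, hsn, hsb, ?_⟩
      show f b < f s
      rw [hfb]; exact hbf
    · rintro ⟨h1p, h2p, h3p, h4p⟩
      obtain ⟨a, b⟩ := p
      simp only at h1p h2p h3p h4p ⊢
      have hPa : i (a : ZMod n) = (a : ZMod n) := by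
        by_contra hna
        have hfa : f a = a := h1 a hna
        have := hge b
        omega
      refine ⟨a, (hAmem a).mpr ⟨h1p, h2p, hPa⟩, b, ⟨h3p, ?_⟩, rfl⟩
      have := hge b
      omega
  -- compute affineLength as F.card
  have hlen : affineLength n f = F.card := by
    have e : {p : ℤ × ℤ // 1 ≤ p.1 ∧ p.1 ≤ n ∧ p.1 < p.2 ∧ f p.2 < f p.1} ≃ {p : ℤ × ℤ // p ∈ F} :=
      Equiv.subtypeEquivRight (fun p => (hFmem p).symm)
    calc affineLength n f = Nat.card {p : ℤ × ℤ // p ∈ F} := Nat.card_congr e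
      _ = F.card := by rw [Nat.card_eq_fintype_card, Fintype.card_coe]
  have hFcard : F.card = ∑ s ∈ A, (f s - s - 1).toNat := by
    rw [hFdef, Finset.card_biUnion]
    · apply Finset.sum_congr rfl
      intro s hs
      rw [Finset.card_image_of_injective _ (fun b c hbc => by
        simpa using congrArg Prod.snd hbc), Int.card_Ioo]
    · intro x hx y hy hxy
      simp only [Finset.disjoint_left, Finset.mem_image, Finset.mem_Ioo]
      rintro p ⟨b, -, rfl⟩ ⟨c, -, hc⟩
      exact hxy (congrArg Prod.fst hc).symm
  -- final arithmetic
  have hAn : A.card ≤ n := by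
    calc A.card ≤ (Finset.Icc (1 : ℤ) (n : ℤ)).card := Finset.card_filter_le _ _
      _ = n := by rw [Int.card_Icc]; omega
  have hfin : (∑ s ∈ A, (f s - s - 1).toNat) = n - A.card := by
    have hcast : ((∑ s ∈ A, (f s - s - 1).toNat : ℕ) : ℤ) = ((n - A.card : ℕ) : ℤ) := by
      rw [Nat.cast_sum, Nat.cast_sub hAn]
      have e1 : (∑ s ∈ A, ((f s - s - 1).toNat : ℤ)) = ∑ s ∈ A, (f s - s - 1) := by
        apply Finset.sum_congr rfl
        intro s hs
        rw [hAmem] at hs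
        have := (h2 s hs.2.2).2.1
        rw [Int.toNat_of_nonneg (by omega)]
      rw [e1, Finset.sum_sub_distrib, Finset.sum_sub_distrib, Finset.sum_const, hsum]
      push_cast
      ring
    exact_mod_cast hcast
  rw [himg, hlen, hFcard, hfin, hcardAS]
end

section
/- The polynomial Σ_{i_•} q^{n - n_{i_•}}, summing over all (1,n) Grassmann necklaces i_• where n_{i_•} is the number of distinct entries of i_•, equals (1+q)^n - q^n. -/
open Polynomial Finset

section aux
variable {n : ℕ} [NeZero n]

lemma exists_add_mem (S : Finset (ZMod n)) (hS : S.Nonempty) (a : ZMod n) :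
    ∃ k : ℕ, a + (k : ZMod n) ∈ S := by
  obtain ⟨s, hs⟩ := hS
  exact ⟨(s - a).val, by simpa [ZMod.natCast_val, ZMod.cast_id] using hs⟩

noncomputable def nextFun (S : Finset (ZMod n)) (hS : S.Nonempty) (a : ZMod n) : ZMod n :=
  a + (Nat.find (exists_add_mem S hS a) : ZMod n)

lemma nextFun_mem (S : Finset (ZMod n)) (hS : S.Nonempty) (a : ZMod n) :
    nextFun S hS a ∈ S := Nat.find_spec (exists_add_mem S hS a)

lemma nextFun_eq_self (S : Finset (ZMod n)) (hS : S.Nonempty) {a : ZMod n} (ha : a ∈ S) :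
    nextFun S hS a = a := by
  have : Nat.find (exists_add_mem S hS a) = 0 := by
    rw [Nat.find_eq_zero]; simpa using ha
  simp [nextFun, this]

lemma nextFun_necklace (S : Finset (ZMod n)) (hS : S.Nonempty) (a : ZMod n)
    (h : nextFun S hS a ≠ a) : nextFun S hS (a + 1) = nextFun S hS a := by
  set k := Nat.find (exists_add_mem S hS a) with hk
  have hk0 : k ≠ 0 := by
    intro h0
    apply h
    simp [nextFun, ← hk, h0]
  have hfind : Nat.find (exists_add_mem S hS (a + 1)) = k - 1 := by
    rw [Nat.find_eq_iff]
    constructor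
    · have : a + 1 + ((k - 1 : ℕ) : ZMod n) = a + (k : ZMod n) := by
        rw [Nat.cast_sub (Nat.one_le_iff_ne_zero.mpr hk0)]
        push_cast
        ring
      rw [this]
      exact Nat.find_spec (exists_add_mem S hS a)
    · intro j hj hmem
      have : a + ((j + 1 : ℕ) : ZMod n) ∈ S := by
        push_cast
        convert hmem using 1
        ring
      exact Nat.find_min (exists_add_mem S hS a) (by omega) this
  simp only [nextFun, ← hk, hfind]
  rw [Nat.cast_sub (Nat.one_le_iff_ne_zero.mpr hk0)]
  push_cast
  ring

lemma image_nextFun (S : Finset (ZMod n)) (hS : S.Nonempty) :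
    Finset.univ.image (nextFun S hS) = S := by
  apply Finset.Subset.antisymm
  · intro x hx
    obtain ⟨a, _, rfl⟩ := Finset.mem_image.mp hx
    exact nextFun_mem S hS a
  · intro s hs
    exact Finset.mem_image.mpr ⟨s, Finset.mem_univ s, nextFun_eq_self S hS hs⟩

variable {i : ZMod n → ZMod n} (hi : ∀ a, i a ≠ a → i (a + 1) = i a)

lemma necklace_eq_add (a : ZMod n) : i a = a + (((i a - a).val : ℕ) : ZMod n) := by
  simp [ZMod.natCast_val, ZMod.cast_id]

include hi in
lemma claimA (a : ZMod n) : ∀ j : ℕ, j ≤ (i a - a).val → i (a + (j : ZMod n)) = i a := by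
  intro j
  induction j with
  | zero => simp
  | succ j ih =>
    intro hj
    have hj' : j ≤ (i a - a).val := by omega
    have h1 : i (a + (j : ZMod n)) = i a := ih hj'
    have hne : i (a + (j : ZMod n)) ≠ a + (j : ZMod n) := by
      rw [h1, necklace_eq_add (i := i) a]
      intro heq
      have : (((i a - a).val : ℕ) : ZMod n) = (j : ZMod n) := by
        have := add_left_cancel heq
        exact this
      have hv : (i a - a).val < n := ZMod.val_lt _
      have hjn : j < n := by omega
      have h2 := congrArg ZMod.val this
      rw [ZMod.val_cast_of_lt hv, ZMod.val_cast_of_lt hjn] at h2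
      omega
    have := hi _ hne
    rw [h1] at this
    rw [← this]
    push_cast
    ring_nf

include hi in
lemma necklace_fixed (a : ZMod n) : i (i a) = i a := by
  have := claimA hi a (i a - a).val le_rfl
  rwa [← necklace_eq_add] at this

include hi in
lemma claimB (a : ZMod n) {j : ℕ} (hj : j < (i a - a).val) (b : ZMod n) :
    i b ≠ a + (j : ZMod n) := by
  intro hb
  have h1 : i (a + (j : ZMod n)) = a + (j : ZMod n) := by
    rw [← hb]; exact necklace_fixed hi b
  have h2 : i (a + (j : ZMod n)) = i a := claimA hi a j (le_of_lt hj)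
  rw [h1, necklace_eq_add (i := i) a] at h2
  have h3 := add_left_cancel h2.symm
  have hv : (i a - a).val < n := ZMod.val_lt _
  have hjn : j < n := by omega
  have h4 := congrArg ZMod.val h3
  rw [ZMod.val_cast_of_lt hv, ZMod.val_cast_of_lt hjn] at h4
  omega

include hi in
lemma nextFun_image_eq (hS : (Finset.univ.image i).Nonempty) :
    nextFun (Finset.univ.image i) hS = i := by
  funext a
  have hfind : Nat.find (exists_add_mem (Finset.univ.image i) hS a) = (i a - a).val := by
    rw [Nat.find_eq_iff]
    constructor
    · rw [← necklace_eq_add]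
      exact Finset.mem_image.mpr ⟨a, Finset.mem_univ a, rfl⟩
    · intro j hj hmem
      obtain ⟨b, _, hb⟩ := Finset.mem_image.mp hmem
      exact claimB hi a hj b hb
  rw [nextFun, hfind, ← necklace_eq_add]

end aux

noncomputable def necklaceEquiv (n : ℕ) [NeZero n] :
    {i : ZMod n → ZMod n // ∀ a, i a ≠ a → i (a + 1) = i a} ≃
      {S : Finset (ZMod n) // S.Nonempty} where
  toFun i := ⟨Finset.univ.image i.1, (Finset.univ_nonempty).image i.1⟩
  invFun S := ⟨nextFun S.1 S.2, fun a h => nextFun_necklace S.1 S.2 a h⟩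
  left_inv i := Subtype.ext (nextFun_image_eq i.2 (Finset.univ_nonempty.image i.1))
  right_inv S := Subtype.ext (image_nextFun S.1 S.2)

/-- The generating polynomial `Σ_{i_•} q^{n - n_{i_•}}` over all `(1,n)` Grassmann
necklaces `i_•` — sequences `(i_a)_{a ∈ ℤ_n}` in `ZMod n` with `i_a ≠ a → i_{a+1} = i_a`
— where `n_{i_•}` is the number of distinct entries of `i_•`, equals `(1+q)^n - q^n`. -/
theorem poincare_polynomial_k_one (n : ℕ) [NeZero n] :
    ∑ i : {i : ZMod n → ZMod n // ∀ a, i a ≠ a → i (a + 1) = i a},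
      (Polynomial.X : Polynomial ℤ) ^ (n - (Finset.univ.image i.1).card)
    = (1 + Polynomial.X) ^ n - Polynomial.X ^ n := by
  classical
  have h1 : ∑ i : {i : ZMod n → ZMod n // ∀ a, i a ≠ a → i (a + 1) = i a},
      (Polynomial.X : Polynomial ℤ) ^ (n - (Finset.univ.image i.1).card)
      = ∑ S : {S : Finset (ZMod n) // S.Nonempty},
        (Polynomial.X : Polynomial ℤ) ^ (n - S.1.card) :=
    Fintype.sum_equiv (necklaceEquiv n) _ _ (fun i => by rfl)
  rw [h1]
  have h2 : ∑ S : {S : Finset (ZMod n) // S.Nonempty},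
      (Polynomial.X : Polynomial ℤ) ^ (n - S.1.card)
      = ∑ S ∈ ((Finset.univ : Finset (Finset (ZMod n))).erase ∅),
        (Polynomial.X : Polynomial ℤ) ^ (n - S.card) := by
    exact (Finset.sum_subtype ((Finset.univ : Finset (Finset (ZMod n))).erase ∅)
      (fun S => by simp [Finset.nonempty_iff_ne_empty])
      (fun S => (Polynomial.X : Polynomial ℤ) ^ (n - S.card))).symm
  rw [h2]
  have h3 : ∑ S : Finset (ZMod n), (Polynomial.X : Polynomial ℤ) ^ (n - S.card)
      = (1 + Polynomial.X) ^ n := by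
    have := Finset.prod_add (fun _ : ZMod n => (1 : Polynomial ℤ))
      (fun _ : ZMod n => (Polynomial.X : Polynomial ℤ)) Finset.univ
    simp only [Finset.prod_const, one_pow, one_mul, Finset.powerset_univ] at this
    rw [Finset.card_univ, ZMod.card] at this
    rw [this]
    apply Finset.sum_congr rfl
    intro S _
    rw [Finset.card_sdiff_of_subset (Finset.subset_univ S), Finset.card_univ, ZMod.card]
  have h4 := Finset.add_sum_erase Finset.univ
    (fun S : Finset (ZMod n) => (Polynomial.X : Polynomial ℤ) ^ (n - S.card))
    (Finset.mem_univ ∅)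
  rw [h3] at h4
  simp only [Finset.card_empty, Nat.sub_zero] at h4
  linear_combination h4
end

section
/- Let M be a representation of the cyclic quiver Δ_n such that every composition of n consecutive arrow maps is zero. Then in the extended representation ~M of the extended cyclic quiver ~Δ_n, every composition of 2n-1 consecutive maps (along any path of length 2n-1 in ~Δ_n) is zero. -/
/-- Validity of a walk in the extended cyclic quiver `~Δ_n`, recorded by its effect on
the second coordinate `r ∈ [n]` of the vertices `(i,r)`: a `true` step is an arrow
`α : (i,r) → (i+1,r+1)` (requiring `r < n`), a `false` step is an arrow
`β : (i,r) → (i,r-1)` (requiring `r > 1`). -/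
def ValidWalkFrom (n : ℕ) : ℕ → List Bool → Prop
  | _, [] => True
  | r, true :: l => r < n ∧ ValidWalkFrom n (r + 1) l
  | r, false :: l => 1 < r ∧ ValidWalkFrom n (r - 1) l

lemma validWalk_count_false_le (n : ℕ) :
    ∀ (r : ℕ) (w : List Bool), ValidWalkFrom n r w →
      w.count false ≤ (r - 1) + w.count true := by
  intro r w
  induction w generalizing r with
  | nil => simp
  | cons b l ih =>
    cases b <;> simp only [ValidWalkFrom] <;> rintro ⟨h1, h2⟩ <;>
      have := ih _ h2 <;> simp [List.count_cons] <;> omega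

lemma count_true_add_count_false (w : List Bool) :
    w.count true + w.count false = w.length := by
  induction w with
  | nil => simp
  | cons b l ih => cases b <;> simp [List.count_cons] <;> omega

/-- Let `M` be a representation of the cyclic quiver `Δ_n`, encoded by a `ℤ_n`-graded
module `W = ⊕_i g i` together with an endomorphism `θ` mapping the grade-`i` piece into
the grade-`(i+1)` piece (the arrow maps), such that every composition of `n` consecutive
arrow maps is zero (`θ^n` vanishes on each `g i`).  In the extended representation `~M`
of `~Δ_n`, whose space at the vertex `(i,r)` is `~M^{(i,r)} = θ^{r-1}(g (i-r+1))`, with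
the `α`-arrows acting by `θ` and the `β`-arrows by inclusion, every composition of
`2n - 1` consecutive maps, i.e. along any walk of length `2n-1` in `~Δ_n` starting at a
vertex `(i,r)`, is zero. -/
theorem extended_rep_nilpotent (n : ℕ) (hn : 0 < n) {W : Type*} [AddCommGroup W]
    [Module ℂ W] (g : ZMod n → Submodule ℂ W) (θ : W →ₗ[ℂ] W)
    (hdirect : DirectSum.IsInternal g)
    (hgrade : ∀ i : ZMod n, Submodule.map θ (g i) ≤ g (i + 1))
    (hnil : ∀ i : ZMod n, ∀ x ∈ g i, (θ ^ n) x = 0) :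
    ∀ (i : ZMod n) (r : ℕ), 1 ≤ r → r ≤ n →
      ∀ w : List Bool, w.length = 2 * n - 1 → ValidWalkFrom n r w →
        ∀ x ∈ Submodule.map (θ ^ (r - 1)) (g (i - ((r - 1 : ℕ) : ZMod n))),
          (θ ^ (w.count true)) x = 0 := by
  intro i r hr1 hrn w hlen hvalid x hx
  obtain ⟨y, hy, rfl⟩ := hx
  have hf := validWalk_count_false_le n r w hvalid
  have hsum := count_true_add_count_false w
  have ht : n ≤ w.count true + (r - 1) := by omega
  have h0 : (θ ^ n) y = 0 := hnil _ y hy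
  rw [← Module.End.mul_apply, ← pow_add]
  have : w.count true + (r - 1) = (w.count true + (r - 1) - n) + n := by omega
  rw [this, pow_add, Module.End.mul_apply, h0, map_zero]
end
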